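/- arXiv:2310.09788 — 5 statements merged into one kernel-verified Lean document; each statement's English description precedes it below -/
import Mathlib

section
/- Let k be an algebraically closed field and let A be a subalgebra of the algebra of n×n matrices over k (with n ≥ 1) such that the only subspaces of kⁿ invariant under every element of A are 0 and kⁿ. Then A equals the full matrix algebra Mₙ(k). (Burnside's theorem.) -/
open LinearMap Module Submodule

section Aux

variable {k V : Type*} [Field k] [IsAlgClosed k] [AddCommGroup V] [Module k V]
  [FiniteDimensional k V] [Nontrivial V]

variable {A : Subalgebra k (Module.End k V)}

/-- Transitivity: irreducibility implies the orbit of any nonzero vector is everything. -/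
theorem burnside_orbit (hA : ∀ U : Submodule k V,
      (∀ f ∈ A, ∀ x ∈ U, f x ∈ U) → U = ⊥ ∨ U = ⊤)
    {x : V} (hx : x ≠ 0) (y : V) : ∃ S ∈ A, S x = y := by
  let U : Submodule k V := A.toSubmodule.map (LinearMap.applyₗ x)
  have hU : ∀ f ∈ A, ∀ z ∈ U, f z ∈ U := by
    rintro f hf z hz
    obtain ⟨S, hS, rfl⟩ := Submodule.mem_map.mp hz
    exact Submodule.mem_map.mpr ⟨f * S, A.mul_mem hf hS, rfl⟩
  rcases hA U hU with h | h
  · exfalso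
    have hxU : x ∈ U := Submodule.mem_map.mpr ⟨1, A.one_mem, rfl⟩
    rw [h] at hxU
    exact hx (by simpa using hxU)
  · have hyU : y ∈ U := h ▸ Submodule.mem_top
    obtain ⟨S, hS, hSx⟩ := Submodule.mem_map.mp hyU
    exact ⟨S, hS, hSx⟩

/-- The functionals `f ∘ R`, `R ∈ A`, span the whole dual. -/
theorem burnside_dual (hA : ∀ U : Submodule k V,
      (∀ f ∈ A, ∀ x ∈ U, f x ∈ U) → U = ⊥ ∨ U = ⊤)
    {f : Module.Dual k V} (hf : f ≠ 0) :
    A.toSubmodule.map (LinearMap.llcomp k V V k f) = ⊤ := by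
  set Φ := A.toSubmodule.map (LinearMap.llcomp k V V k f) with hΦ
  have hmemΦ : ∀ R ∈ A, f ∘ₗ R ∈ Φ := fun R hR => Submodule.mem_map.mpr ⟨R, hR, rfl⟩
  have hco : Φ.dualCoannihilator = ⊥ := by
    have hinvU : ∀ g ∈ A, ∀ z ∈ Φ.dualCoannihilator, g z ∈ Φ.dualCoannihilator := by
      intro g hg z hz
      rw [Submodule.mem_dualCoannihilator]
      intro φ hφ
      obtain ⟨R, hR, rfl⟩ := Submodule.mem_map.mp hφ
      have : f ∘ₗ (R * g) ∈ Φ := hmemΦ _ (A.mul_mem hR hg)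
      have := (Submodule.mem_dualCoannihilator z).mp hz _ this
      simpa [Module.End.mul_apply] using this
    rcases hA Φ.dualCoannihilator hinvU with h | h
    · exact h
    · exfalso
      obtain ⟨v, hv⟩ : ∃ v, f v ≠ 0 := by
        by_contra h'; push_neg at h'; exact hf (LinearMap.ext h')
      have hvmem : v ∈ Φ.dualCoannihilator := h ▸ Submodule.mem_top
      have := (Submodule.mem_dualCoannihilator v).mp hvmem (f ∘ₗ 1) (hmemΦ 1 A.one_mem)
      exact hv this
  have h2 : Φ.dualCoannihilator.dualAnnihilator = Φ :=
    Subspace.dualCoannihilator_dualAnnihilator_eq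
  rw [← h2, hco, Submodule.dualAnnihilator_bot]

/-- Burnside's theorem for endomorphism algebras. -/
theorem burnside_end (hA : ∀ U : Submodule k V,
      (∀ f ∈ A, ∀ x ∈ U, f x ∈ U) → U = ⊥ ∨ U = ⊤) : A = ⊤ := by
  classical
  have h1 : (1 : Module.End k V) ≠ 0 := by
    obtain ⟨v, hv⟩ := exists_ne (0 : V)
    intro h
    exact hv (by simpa using congrFun (congrArg DFunLike.coe h) v)
  set S : Set ℕ :=
    {r | ∃ T : Module.End k V, T ∈ A ∧ T ≠ 0 ∧ Module.finrank k (LinearMap.range T) = r}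
    with hS
  have hne : S.Nonempty := ⟨_, 1, A.one_mem, h1, rfl⟩
  obtain ⟨T, hTA, hT0, hTr⟩ : sInf S ∈ S := Nat.sInf_mem hne
  set r := sInf S with hrdef
  have hmin : ∀ T' : Module.End k V, T' ∈ A → T' ≠ 0 →
      r ≤ Module.finrank k (LinearMap.range T') :=
    fun T' h h' => Nat.sInf_le ⟨T', h, h', rfl⟩
  have hrpos : 0 < r := by
    rw [← hTr]
    have hne' : LinearMap.range T ≠ ⊥ := fun hb => hT0 (LinearMap.range_eq_bot.mp hb)
    have : Nontrivial (LinearMap.range T) := Submodule.nontrivial_iff_ne_bot.mpr hne'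
    exact Module.finrank_pos
  have hr1 : r = 1 := by
    by_contra hr
    have hr2 : 2 ≤ r := by omega
    obtain ⟨u, hu⟩ : ∃ u, T u ≠ 0 := by
      by_contra h; push_neg at h
      exact hT0 (LinearMap.ext fun v => h v)
    have hspan : ¬ (LinearMap.range T ≤ k ∙ T u) := by
      intro hle
      have h1' : Module.finrank k (LinearMap.range T) ≤ Module.finrank k (k ∙ T u) :=
        Submodule.finrank_mono hle
      rw [hTr, finrank_span_singleton hu] at h1'
      omega
    obtain ⟨w, hwR, hwspan⟩ := SetLike.not_le_iff_exists.mp hspan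
    obtain ⟨v, rfl⟩ : ∃ v, T v = w := hwR
    obtain ⟨Sg, hSgA, hSg⟩ := burnside_orbit hA hu v
    set W := LinearMap.range T with hW
    have hinv : ∀ z ∈ W, (T * Sg) z ∈ W := fun z _ => ⟨Sg z, rfl⟩
    have hWnt : Nontrivial W := by
      exact Submodule.nontrivial_iff_ne_bot.mpr (fun hb => hT0 (LinearMap.range_eq_bot.mp hb))
    set φ : W →ₗ[k] W := (T * Sg).restrict hinv with hφ
    obtain ⟨lam, hlam⟩ := Module.End.exists_eigenvalue φ
    obtain ⟨z0, hz0⟩ := hlam.exists_hasEigenvector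
    set T'' : Module.End k V := T * Sg * T - lam • T with hT''
    have hT''A : T'' ∈ A :=
      A.sub_mem (A.mul_mem (A.mul_mem hTA hSgA) hTA) (A.smul_mem hTA lam)
    have hT''0 : T'' ≠ 0 := by
      intro h
      apply hwspan
      have h0 : T (Sg (T u)) - lam • T u = 0 := by
        have := congrFun (congrArg DFunLike.coe h) u
        simpa [hT'', Module.End.mul_apply] using this
      rw [hSg, sub_eq_zero] at h0
      rw [h0]
      exact Submodule.smul_mem _ _ (Submodule.mem_span_singleton_self _)
    have hinv2 : ∀ z ∈ W, (T * Sg - lam • (1 : Module.End k V)) z ∈ W := by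
      intro z hz
      have h1' : (T * Sg) z ∈ W := hinv z hz
      have h2' : lam • z ∈ W := Submodule.smul_mem _ _ hz
      simpa using Submodule.sub_mem _ h1' h2'
    set ψ : W →ₗ[k] W := (T * Sg - lam • (1 : Module.End k V)).restrict hinv2 with hψ
    have hψz0 : ψ z0 = 0 := by
      have hev : (T * Sg) (z0 : V) = lam • (z0 : V) := by
        have := hz0.apply_eq_smul
        have := congrArg Subtype.val this
        simpa [hφ, LinearMap.restrict_coe_apply] using this
      apply Subtype.ext
      simp [hψ, LinearMap.restrict_coe_apply, hev]
    have hψrank : Module.finrank k (LinearMap.range ψ) < r := by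
      have hrn := LinearMap.finrank_range_add_finrank_ker ψ
      have hWr : Module.finrank k W = r := hTr
      have hkerpos : 0 < Module.finrank k (LinearMap.ker ψ) := by
        have : LinearMap.ker ψ ≠ ⊥ := by
          intro hbot
          have : z0 ∈ LinearMap.ker ψ := hψz0
          rw [hbot] at this
          exact hz0.2 (by simpa using this)
        have : Nontrivial (LinearMap.ker ψ) := Submodule.nontrivial_iff_ne_bot.mpr this
        exact Module.finrank_pos
      omega
    have hle : LinearMap.range T'' ≤ (LinearMap.range ψ).map W.subtype := by
      rintro _ ⟨a, rfl⟩
      refine Submodule.mem_map.mpr ⟨ψ ⟨T a, ⟨a, rfl⟩⟩, ⟨_, rfl⟩, ?_⟩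
      show ((ψ ⟨T a, _⟩ : W) : V) = T'' a
      rw [LinearMap.restrict_coe_apply]
      simp [hT'', Module.End.mul_apply]
    have hfr : Module.finrank k (LinearMap.range T'') < r := by
      calc Module.finrank k (LinearMap.range T'')
          ≤ Module.finrank k ((LinearMap.range ψ).map W.subtype) := Submodule.finrank_mono hle
        _ = Module.finrank k (LinearMap.range ψ) := Submodule.finrank_map_subtype_eq _ _
        _ < r := hψrank
    exact absurd (hmin T'' hT''A hT''0) (by omega)
  -- now T has rank one
  rw [hr1] at hTr
  obtain ⟨x, hxW, hx0⟩ : ∃ x ∈ LinearMap.range T, x ≠ (0 : V) := by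
    exact Submodule.exists_mem_ne_zero_of_ne_bot
      (fun hb => hT0 (LinearMap.range_eq_bot.mp hb))
  have hxspan : (k ∙ x) = LinearMap.range T := by
    apply Submodule.eq_of_le_of_finrank_eq
    · rwa [Submodule.span_singleton_le_iff_mem]
    · rw [finrank_span_singleton hx0, hTr]
  have hmem : ∀ v, T v ∈ k ∙ x := fun v => hxspan ▸ LinearMap.mem_range_self T v
  set e := LinearEquiv.toSpanNonzeroSingleton k V x hx0 with he
  set f : Module.Dual k V := (e.symm : (k ∙ x) →ₗ[k] k) ∘ₗ (T.codRestrict (k ∙ x) hmem)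
    with hfdef
  have hTf : ∀ v, T v = f v • x := by
    intro v
    have h1' : e (f v) = T.codRestrict (k ∙ x) hmem v := e.apply_symm_apply _
    have h2' := congrArg Subtype.val h1'
    simpa [he] using h2'.symm
  have hf0 : f ≠ 0 := by
    intro h
    apply hT0
    ext v
    rw [hTf v, h]
    simp
  have key : ∀ (g : Module.Dual k V) (y : V), LinearMap.smulRight g y ∈ A := by
    intro g y
    obtain ⟨Sy, hSyA, hSy⟩ := burnside_orbit hA hx0 y
    have hΦ := burnside_dual hA hf0
    have hsub : A.toSubmodule.map (LinearMap.llcomp k V V k f) ≤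
        Submodule.comap (LinearMap.smulRightₗ.flip y) A.toSubmodule := by
      rw [Submodule.map_le_iff_le_comap]
      intro R hR
      simp only [Submodule.mem_comap, LinearMap.flip_apply]
      have heq : LinearMap.smulRightₗ (LinearMap.llcomp k V V k f R) y = Sy * T * R := by
        ext v
        simp [LinearMap.smulRightₗ_apply, Module.End.mul_apply, hTf, ← hSy, map_smul]
      show LinearMap.smulRightₗ (LinearMap.llcomp k V V k f R) y ∈ A.toSubmodule
      rw [heq]
      exact A.mul_mem (A.mul_mem hSyA hTA) hR
    rw [hΦ] at hsub
    have := hsub (Submodule.mem_top (x := g))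
    simpa using this
  rw [eq_top_iff]
  rintro g -
  let b := Module.finBasis k V
  have hg : g = ∑ i, LinearMap.smulRight (b.coord i) (g (b i)) := by
    apply b.ext
    intro j
    rw [LinearMap.sum_apply]
    simp only [LinearMap.smulRight_apply, Basis.coord_apply, Basis.repr_self,
      Finsupp.single_apply]
    rw [Finset.sum_eq_single j]
    · simp
    · intro i _ hij
      simp [Ne.symm hij]
    · intro h
      exact absurd (Finset.mem_univ j) h
  rw [hg]
  exact sum_mem fun i _ => key _ _

end Aux

/-- Burnside's theorem: a subalgebra of Mₙ(k), k algebraically closed, acting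
irreducibly on kⁿ is the whole matrix algebra. -/
theorem stmt2 (k : Type*) [Field k] [IsAlgClosed k] (n : ℕ) (hn : 1 ≤ n)
    (A : Subalgebra k (Matrix (Fin n) (Fin n) k))
    (hA : ∀ U : Submodule k (Fin n → k),
      (∀ M ∈ A, ∀ x ∈ U, M.mulVec x ∈ U) → U = ⊥ ∨ U = ⊤) :
    A = ⊤ := by
  haveI : Nonempty (Fin n) := Fin.pos_iff_nonempty.mp hn
  haveI : Nontrivial (Fin n → k) := inferInstance
  set e : Matrix (Fin n) (Fin n) k ≃ₐ[k] Module.End k (Fin n → k) :=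
    Matrix.toLinAlgEquiv' with he
  set A' : Subalgebra k (Module.End k (Fin n → k)) := A.map (e : _ →ₐ[k] _) with hA'def
  have hA' : ∀ U : Submodule k (Fin n → k),
      (∀ g ∈ A', ∀ x ∈ U, g x ∈ U) → U = ⊥ ∨ U = ⊤ := by
    intro U hU
    apply hA U
    intro M hM x hx
    have : e M ∈ A' := ⟨M, hM, rfl⟩
    have := hU (e M) this x hx
    simpa [he, Matrix.toLinAlgEquiv'_apply, Matrix.toLin'_apply] using this
  have htop : A' = ⊤ := burnside_end hA'
  rw [eq_top_iff]
  rintro M -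
  have : e M ∈ A' := htop ▸ Algebra.mem_top
  obtain ⟨N, hN, hNe⟩ := this
  rwa [← e.injective hNe]
end

section
/- Let k be an algebraically closed field, n, d, m positive integers with n ≥ d ≥ 1 and m ≥ ⌈n/d⌉ + 2. Then there exist n×d matrices V₁, ..., V_m over k such that whenever A ∈ Mₙ(k) and C ∈ M_d(k) satisfy A·V_a = V_a·C for all a = 1,...,m, there is a scalar λ ∈ k with A = λ·Iₙ and C = λ·I_d. -/
open Matrix

section stmt7aux

variable {k : Type*} [Field k]

/-- selection matrix with columns `e_t, ..., e_{t+d-1}` -/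
def stmt7S (k : Type*) [Field k] (n d t : ℕ) : Matrix (Fin n) (Fin d) k :=
  Matrix.of fun i j => if (i : ℕ) = t + (j : ℕ) then 1 else 0

/-- shift matrix -/
def stmt7J (k : Type*) [Field k] (d : ℕ) : Matrix (Fin d) (Fin d) k :=
  Matrix.of fun i j => if (i : ℕ) = (j : ℕ) + 1 then 1 else 0

lemma stmt7_sum_ite {N : ℕ} (c : ℕ) (f : Fin N → k) :
    (∑ l : Fin N, if (l : ℕ) = c then f l else 0) = if hc : c < N then f ⟨c, hc⟩ else 0 := by
  split
  · next hc =>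
    rw [Finset.sum_eq_single (⟨c, hc⟩ : Fin N)]
    · simp
    · intro l _ hl
      rw [if_neg]
      simpa [Fin.ext_iff] using hl
    · simp
  · next hc =>
    apply Finset.sum_eq_zero
    intro l _
    rw [if_neg]
    omega

lemma stmt7_CJ {d : ℕ} (C : Matrix (Fin d) (Fin d) k) (i j : Fin d) :
    (C * stmt7J k d) i j = if h : (j : ℕ) + 1 < d then C i ⟨(j : ℕ) + 1, h⟩ else 0 := by
  simp only [Matrix.mul_apply, stmt7J, Matrix.of_apply, mul_ite, mul_one, mul_zero]
  exact stmt7_sum_ite _ _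

lemma stmt7_JC {d : ℕ} (C : Matrix (Fin d) (Fin d) k) (i j : Fin d) :
    (stmt7J k d * C) i j =
      if h : 1 ≤ (i : ℕ) then C ⟨(i : ℕ) - 1, by omega⟩ j else 0 := by
  simp only [Matrix.mul_apply, stmt7J, Matrix.of_apply, ite_mul, one_mul, zero_mul]
  split
  · next h =>
    simp only [show ∀ l : Fin d, ((i : ℕ) = (l : ℕ) + 1) ↔ ((l : ℕ) = (i : ℕ) - 1) from
      fun l => by omega]
    rw [stmt7_sum_ite, dif_pos (by omega)]
  · next h =>
    exact Finset.sum_eq_zero fun l _ => if_neg (by omega)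

lemma stmt7_CJt {d : ℕ} (C : Matrix (Fin d) (Fin d) k) (i j : Fin d) :
    (C * (stmt7J k d)ᵀ) i j =
      if h : 1 ≤ (j : ℕ) then C i ⟨(j : ℕ) - 1, by omega⟩ else 0 := by
  simp only [Matrix.mul_apply, stmt7J, Matrix.transpose_apply, Matrix.of_apply,
    mul_ite, mul_one, mul_zero]
  split
  · next h =>
    simp only [show ∀ l : Fin d, ((j : ℕ) = (l : ℕ) + 1) ↔ ((l : ℕ) = (j : ℕ) - 1) from
      fun l => by omega]
    rw [stmt7_sum_ite, dif_pos (by omega)]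
  · next h =>
    exact Finset.sum_eq_zero fun l _ => if_neg (by omega)

lemma stmt7_JtC {d : ℕ} (C : Matrix (Fin d) (Fin d) k) (i j : Fin d) :
    ((stmt7J k d)ᵀ * C) i j =
      if h : (i : ℕ) + 1 < d then C ⟨(i : ℕ) + 1, h⟩ j else 0 := by
  simp only [Matrix.mul_apply, stmt7J, Matrix.transpose_apply, Matrix.of_apply,
    ite_mul, one_mul, zero_mul]
  exact stmt7_sum_ite _ _

lemma stmt7_AS {n d t : ℕ} (A : Matrix (Fin n) (Fin n) k) (i : Fin n) (j : Fin d) :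
    (A * stmt7S k n d t) i j = if h : t + (j : ℕ) < n then A i ⟨t + (j : ℕ), h⟩ else 0 := by
  simp only [Matrix.mul_apply, stmt7S, Matrix.of_apply, mul_ite, mul_one, mul_zero]
  exact stmt7_sum_ite _ _

lemma stmt7_SC {n d t : ℕ} (C : Matrix (Fin d) (Fin d) k) (i : Fin n) (j : Fin d) :
    (stmt7S k n d t * C) i j =
      if h : t ≤ (i : ℕ) ∧ (i : ℕ) < t + d then C ⟨(i : ℕ) - t, by omega⟩ j else 0 := by
  simp only [Matrix.mul_apply, stmt7S, Matrix.of_apply, ite_mul, one_mul, zero_mul]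
  split
  · next h =>
    simp only [show ∀ l : Fin d, ((i : ℕ) = t + (l : ℕ)) ↔ ((l : ℕ) = (i : ℕ) - t) from
      fun l => by omega]
    rw [stmt7_sum_ite, dif_pos (by omega)]
  · next h =>
    exact Finset.sum_eq_zero fun l _ => if_neg (by omega)

end stmt7aux

section stmt7aux2

variable {k : Type*} [Field k]

lemma stmt7_cancel {n d : ℕ} (hnd : d ≤ n) (M N : Matrix (Fin d) (Fin d) k)
    (h : stmt7S k n d 0 * M = stmt7S k n d 0 * N) : M = N := by
  ext i j
  have hi : (i : ℕ) < n := lt_of_lt_of_le i.isLt hnd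
  have e := congrFun (congrFun h ⟨(i : ℕ), hi⟩) j
  rw [stmt7_SC, stmt7_SC] at e
  rw [dif_pos (by constructor <;> simp only [Fin.val_mk] <;> omega)] at e
  simpa using e

lemma stmt7_centralizer {d : ℕ} (hd : 0 < d) (C : Matrix (Fin d) (Fin d) k)
    (h1 : C * stmt7J k d = stmt7J k d * C)
    (h2 : C * (stmt7J k d)ᵀ = (stmt7J k d)ᵀ * C) :
    C = C ⟨0, hd⟩ ⟨0, hd⟩ • 1 := by
  have top : ∀ (s : ℕ) (hs : s + 1 < d), C ⟨0, hd⟩ ⟨s + 1, hs⟩ = 0 := by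
    intro s hs
    have e := congrFun (congrFun h1 ⟨0, hd⟩) ⟨s, by omega⟩
    rw [stmt7_CJ, stmt7_JC, dif_pos hs, dif_neg (by simp)] at e
    exact e
  have left : ∀ (s : ℕ) (hs : s + 1 < d), C ⟨s + 1, hs⟩ ⟨0, hd⟩ = 0 := by
    intro s hs
    have e := congrFun (congrFun h2 ⟨s, by omega⟩) ⟨0, hd⟩
    rw [stmt7_CJt, stmt7_JtC, dif_pos hs, dif_neg (by simp)] at e
    exact e.symm
  have step : ∀ (ii jj : ℕ) (hi : ii + 1 < d) (hj : jj + 1 < d),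
      C ⟨ii + 1, hi⟩ ⟨jj + 1, hj⟩ = C ⟨ii, by omega⟩ ⟨jj, by omega⟩ := by
    intro ii jj hi hj
    have e := congrFun (congrFun h1 ⟨ii + 1, hi⟩) ⟨jj, by omega⟩
    rw [stmt7_CJ, stmt7_JC, dif_pos hj, dif_pos (by simp)] at e
    simpa using e
  have key : ∀ (ii jj : ℕ) (hi : ii < d) (hj : jj < d),
      C ⟨ii, hi⟩ ⟨jj, hj⟩ = if ii = jj then C ⟨0, hd⟩ ⟨0, hd⟩ else 0 := by
    intro ii
    induction ii with
    | zero =>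
      intro jj hi hj
      match jj with
      | 0 => simp
      | s + 1 => simpa using top s hj
    | succ t ih =>
      intro jj hi hj
      match jj with
      | 0 => simpa using left t hi
      | s + 1 =>
        rw [step t s hi hj, ih s (by omega) (by omega)]
        simp only [Nat.add_right_cancel_iff]
  ext i j
  rw [show i = ⟨(i : ℕ), i.isLt⟩ from rfl, show j = ⟨(j : ℕ), j.isLt⟩ from rfl,
    key i j i.isLt j.isLt]
  simp [Matrix.one_apply, Fin.ext_iff]

end stmt7aux2




/-- For n ≥ d ≥ 1 and m ≥ ⌈n/d⌉ + 2 (note ⌈n/d⌉ = (n + d - 1)/d in ℕ), there exist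
n×d matrices V₁, ..., V_m such that any pair (A, C) with A·V_a = V_a·C for all a
is a scalar multiple of (Iₙ, I_d). -/
theorem stmt7 (k : Type*) [Field k] [IsAlgClosed k] (n d m : ℕ)
    (hd : 1 ≤ d) (hnd : d ≤ n) (hm : (n + d - 1) / d + 2 ≤ m) :
    ∃ V : Fin m → Matrix (Fin n) (Fin d) k,
      ∀ (A : Matrix (Fin n) (Fin n) k) (C : Matrix (Fin d) (Fin d) k),
        (∀ a : Fin m, A * V a = V a * C) →
          ∃ c : k, A = c • (1 : Matrix (Fin n) (Fin n) k) ∧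
            C = c • (1 : Matrix (Fin d) (Fin d) k) := by
  classical
  have hd0 : 0 < d := hd
  set q := (n + d - 1) / d with hq
  have hq1 : 1 ≤ q := by
    rw [hq, Nat.le_div_iff_mul_le hd0]; omega
  have hqd : n ≤ q * d := by
    have h1 : d * q + (n + d - 1) % d = n + d - 1 := Nat.div_add_mod _ d
    have h2 : (n + d - 1) % d < d := Nat.mod_lt _ hd0
    rw [mul_comm]; omega
  refine ⟨fun a => if (a : ℕ) < q then stmt7S k n d (min ((a : ℕ) * d) (n - d))
      else if (a : ℕ) = q then stmt7S k n d 0 * stmt7J k d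
      else if (a : ℕ) = q + 1 then stmt7S k n d 0 * (stmt7J k d)ᵀ
      else 0, ?_⟩
  intro A C h
  have h0 : A * stmt7S k n d 0 = stmt7S k n d 0 * C := by
    have e := h ⟨0, by omega⟩
    simpa [show (0 : ℕ) < q from hq1] using e
  have hJ : A * (stmt7S k n d 0 * stmt7J k d) = (stmt7S k n d 0 * stmt7J k d) * C := by
    have e := h ⟨q, by omega⟩
    simpa using e
  have hJt : A * (stmt7S k n d 0 * (stmt7J k d)ᵀ)
      = (stmt7S k n d 0 * (stmt7J k d)ᵀ) * C := by
    have e := h ⟨q + 1, by omega⟩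
    simpa using e
  have hCJ : C * stmt7J k d = stmt7J k d * C := by
    apply stmt7_cancel hnd
    rw [← Matrix.mul_assoc, ← h0, Matrix.mul_assoc, hJ, Matrix.mul_assoc]
  have hCJt : C * (stmt7J k d)ᵀ = (stmt7J k d)ᵀ * C := by
    apply stmt7_cancel hnd
    rw [← Matrix.mul_assoc, ← h0, Matrix.mul_assoc, hJt, Matrix.mul_assoc]
  have hC : C = C ⟨0, hd0⟩ ⟨0, hd0⟩ • 1 := stmt7_centralizer hd0 C hCJ hCJt
  set c := C ⟨0, hd0⟩ ⟨0, hd0⟩ with hcdef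
  refine ⟨c, ?_, hC⟩
  ext i j
  have hjn : (j : ℕ) < n := j.isLt
  have haq : (j : ℕ) / d < q := by
    rw [Nat.div_lt_iff_lt_mul hd0]; omega
  set t := min ((j : ℕ) / d * d) (n - d) with ht
  have hw : A * stmt7S k n d t = stmt7S k n d t * C := by
    have e := h ⟨(j : ℕ) / d, by omega⟩
    simpa [haq] using e
  have e1 : (j : ℕ) / d * d ≤ (j : ℕ) := Nat.div_mul_le_self _ _
  have e2 : (j : ℕ) < (j : ℕ) / d * d + d := by
    calc (j : ℕ) = d * ((j : ℕ) / d) + (j : ℕ) % d := (Nat.div_add_mod _ _).symm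
      _ < d * ((j : ℕ) / d) + d := Nat.add_lt_add_left (Nat.mod_lt _ hd0) _
      _ = (j : ℕ) / d * d + d := by rw [mul_comm]
  have htj : t ≤ (j : ℕ) ∧ (j : ℕ) < t + d := by
    rcases min_cases ((j : ℕ) / d * d) (n - d) with ⟨h1, h2⟩ | ⟨h1, h2⟩ <;>
      rw [ht, h1] <;> omega
  rw [hC, Matrix.mul_smul, Matrix.mul_one] at hw
  have hj' : (j : ℕ) - t < d := by omega
  have e := congrFun (congrFun hw i) ⟨(j : ℕ) - t, hj'⟩
  rw [stmt7_AS, dif_pos (show t + ((⟨(j : ℕ) - t, hj'⟩ : Fin d) : ℕ) < n by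
    simp only [Fin.val_mk]; omega)] at e
  simp only [Matrix.smul_apply, stmt7S, Matrix.of_apply, Fin.val_mk, smul_eq_mul,
    mul_ite, mul_one, mul_zero] at e
  rw [show j = (⟨t + ((j : ℕ) - t), by omega⟩ : Fin n) from
    Fin.ext (show (j : ℕ) = t + ((j : ℕ) - t) by omega)]
  rw [Matrix.smul_apply, Matrix.one_apply, smul_eq_mul]
  refine e.trans ?_
  simp only [Fin.ext_iff, Fin.val_mk, mul_ite, mul_one, mul_zero]
end

section
/- Let k be an algebraically closed field, U, W finite-dimensional k-vector spaces with dim U = n ≥ 2 and dim W = m ≥ 4. For any integer d with 2n/m < d < nm − 2n/m, there exists a d-dimensional subspace L ⊆ U ⊗ W that anchors U. -/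
open Matrix TensorProduct LinearMap

/-- L ⊆ U ⊗ W anchors U: every φ ∈ End(U) with (φ ⊗ id_W)(L) ⊆ L is scalar. -/
def Anchors (k U W : Type*) [Field k] [AddCommGroup U] [Module k U]
    [AddCommGroup W] [Module k W] (L : Submodule k (TensorProduct k U W)) : Prop :=
  ∀ φ : Module.End k U, (∀ x ∈ L, LinearMap.rTensor W φ x ∈ L) →
    ∃ c : k, φ = c • (1 : Module.End k U)


open Matrix

section core
variable {k : Type*} [Field k]

/-- injection window at offset `o` (allows overflow columns, which become zero) -/
def win (k : Type*) [Field k] (n d o : ℕ) : Matrix (Fin n) (Fin d) k :=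
  Matrix.of fun i t => if (i : ℕ) = o + (t : ℕ) then 1 else 0

/-- diagonal twist -/
def twist (k : Type*) [Field k] (n d : ℕ) (μ : Fin d → k) : Matrix (Fin n) (Fin d) k :=
  Matrix.of fun i t => if (i : ℕ) = (t : ℕ) then μ t else 0

/-- projection window at offset `o` -/
def vin (k : Type*) [Field k] (n d o : ℕ) : Matrix (Fin n) (Fin d) k :=
  Matrix.of fun i s => if (s : ℕ) = (i : ℕ) + o then 1 else 0

lemma sum_ite_nat {n : ℕ} (f : Fin n → k) (a : ℕ) :
    (∑ i : Fin n, if (i : ℕ) = a then f i else 0) =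
      if h : a < n then f ⟨a, h⟩ else 0 := by
  split_ifs with h
  · rw [Finset.sum_eq_single (⟨a, h⟩ : Fin n)]
    · simp
    · intro b _ hb
      simp only [ite_eq_right_iff]
      intro hba; exact absurd (Fin.ext hba) hb
    · simp
  · apply Finset.sum_eq_zero
    intro b _
    simp only [ite_eq_right_iff]
    intro hba; exact absurd (hba ▸ b.2) h

lemma mul_win_apply {n d o : ℕ} (M : Matrix (Fin n) (Fin n) k) (i : Fin n) (t : Fin d) :
    (M * win k n d o) i t = if h : o + (t : ℕ) < n then M i ⟨o + t, h⟩ else 0 := by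
  rw [Matrix.mul_apply]
  have : ∀ i' : Fin n, M i i' * win k n d o i' t
      = if (i' : ℕ) = o + (t : ℕ) then M i i' else 0 := by
    intro i'; simp [win, mul_ite]
  simp_rw [this]
  exact sum_ite_nat _ _

lemma win_mul_apply {n d o : ℕ} (Cm : Matrix (Fin d) (Fin d) k) (i : Fin n) (t : Fin d) :
    (win k n d o * Cm) i t =
      if h : o ≤ (i : ℕ) ∧ (i : ℕ) - o < d then Cm ⟨(i : ℕ) - o, h.2⟩ t else 0 := by
  rw [Matrix.mul_apply]
  have : ∀ s : Fin d, win k n d o i s * Cm s t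
      = if (s : ℕ) = (i : ℕ) - o ∧ o ≤ (i : ℕ) then Cm s t else 0 := by
    intro s
    simp only [win, Matrix.of_apply, ite_mul, one_mul, zero_mul]
    congr 1
    simp only [eq_iff_iff]
    omega
  simp_rw [this]
  split_ifs with h
  · rw [Finset.sum_eq_single (⟨(i : ℕ) - o, h.2⟩ : Fin d)]
    · simp [h.1]
    · intro b _ hb
      simp only [ite_eq_right_iff]
      intro hba; exact absurd (Fin.ext hba.1) hb
    · simp
  · apply Finset.sum_eq_zero
    intro b _
    simp only [ite_eq_right_iff]
    rintro ⟨h1, h2⟩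
    exact absurd ⟨h2, h1 ▸ b.2⟩ h

lemma mul_twist_apply {n d : ℕ} (hdn : d ≤ n) (μ : Fin d → k)
    (M : Matrix (Fin n) (Fin n) k) (i : Fin n) (t : Fin d) :
    (M * twist k n d μ) i t = μ t * M i ⟨t, lt_of_lt_of_le t.2 hdn⟩ := by
  rw [Matrix.mul_apply]
  have : ∀ i' : Fin n, M i i' * twist k n d μ i' t
      = if (i' : ℕ) = (t : ℕ) then μ t * M i i' else 0 := by
    intro i'
    simp only [twist, Matrix.of_apply, mul_ite, mul_zero]
    split_ifs <;> ring
  simp_rw [this]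
  rw [sum_ite_nat (fun i' => μ t * M i i') (t : ℕ)]
  simp [lt_of_lt_of_le t.2 hdn]

lemma twist_mul_apply {n d : ℕ} (μ : Fin d → k)
    (Cm : Matrix (Fin d) (Fin d) k) (i : Fin n) (t : Fin d) :
    (twist k n d μ * Cm) i t =
      if h : (i : ℕ) < d then μ ⟨i, h⟩ * Cm ⟨i, h⟩ t else 0 := by
  rw [Matrix.mul_apply]
  have : ∀ s : Fin d, twist k n d μ i s * Cm s t
      = if (s : ℕ) = (i : ℕ) then μ s * Cm s t else 0 := by
    intro s
    simp only [twist, Matrix.of_apply, ite_mul, zero_mul]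
    congr 1
    simp only [eq_iff_iff]; omega
  simp_rw [this]
  split_ifs with h
  · rw [Finset.sum_eq_single (⟨(i : ℕ), h⟩ : Fin d)]
    · simp
    · intro b _ hb
      simp only [ite_eq_right_iff]
      intro hba; exact absurd (Fin.ext hba) hb
    · simp
  · apply Finset.sum_eq_zero
    intro b _
    simp only [ite_eq_right_iff]
    intro h1; exact absurd (h1 ▸ b.2) h

lemma mul_vin_apply {n d o : ℕ} (M : Matrix (Fin n) (Fin n) k) (i : Fin n) (s : Fin d) :
    (M * vin k n d o) i s =
      if h : o ≤ (s : ℕ) ∧ (s : ℕ) - o < n then M i ⟨(s : ℕ) - o, h.2⟩ else 0 := by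
  rw [Matrix.mul_apply]
  have : ∀ i' : Fin n, M i i' * vin k n d o i' s
      = if (i' : ℕ) = (s : ℕ) - o ∧ o ≤ (s : ℕ) then M i i' else 0 := by
    intro i'
    simp only [vin, Matrix.of_apply, mul_ite, mul_one, mul_zero]
    congr 1
    simp only [eq_iff_iff]; omega
  simp_rw [this]
  split_ifs with h
  · rw [Finset.sum_eq_single (⟨(s : ℕ) - o, h.2⟩ : Fin n)]
    · simp [h.1]
    · intro b _ hb
      simp only [ite_eq_right_iff]
      intro hba; exact absurd (Fin.ext hba.1) hb
    · simp
  · apply Finset.sum_eq_zero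
    intro b _
    simp only [ite_eq_right_iff]
    rintro ⟨h1, h2⟩
    exact absurd ⟨h2, h1 ▸ b.2⟩ h

lemma vin_mul_apply {n d o : ℕ} (Cm : Matrix (Fin d) (Fin d) k) (i : Fin n) (s : Fin d) :
    (vin k n d o * Cm) i s =
      if h : (i : ℕ) + o < d then Cm ⟨(i : ℕ) + o, h⟩ s else 0 := by
  rw [Matrix.mul_apply]
  have : ∀ s' : Fin d, vin k n d o i s' * Cm s' s
      = if (s' : ℕ) = (i : ℕ) + o then Cm s' s else 0 := by
    intro s'; simp [vin, ite_mul]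
  simp_rw [this]
  exact sum_ite_nat _ _

end core

section core2
variable {k : Type*} [Field k]

variable (hmw : ∀ {n d o : ℕ} (M : Matrix (Fin n) (Fin n) k) (i : Fin n) (t : Fin d),
    (M * win k n d o) i t = if h : o + (t : ℕ) < n then M i ⟨o + t, h⟩ else 0)
variable (hwm : ∀ {n d o : ℕ} (Cm : Matrix (Fin d) (Fin d) k) (i : Fin n) (t : Fin d),
    (win k n d o * Cm) i t =
      if h : o ≤ (i : ℕ) ∧ (i : ℕ) - o < d then Cm ⟨(i : ℕ) - o, h.2⟩ t else 0)
variable (hmt : ∀ {n d : ℕ} (hdn : d ≤ n) (μ : Fin d → k)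
    (M : Matrix (Fin n) (Fin n) k) (i : Fin n) (t : Fin d),
    (M * twist k n d μ) i t = μ t * M i ⟨t, lt_of_lt_of_le t.2 hdn⟩)
variable (htm : ∀ {n d : ℕ} (μ : Fin d → k)
    (Cm : Matrix (Fin d) (Fin d) k) (i : Fin n) (t : Fin d),
    (twist k n d μ * Cm) i t =
      if h : (i : ℕ) < d then μ ⟨i, h⟩ * Cm ⟨i, h⟩ t else 0)
variable (hmv : ∀ {n d o : ℕ} (M : Matrix (Fin n) (Fin n) k) (i : Fin n) (s : Fin d),
    (M * vin k n d o) i s =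
      if h : o ≤ (s : ℕ) ∧ (s : ℕ) - o < n then M i ⟨(s : ℕ) - o, h.2⟩ else 0)
variable (hvm : ∀ {n d o : ℕ} (Cm : Matrix (Fin d) (Fin d) k) (i : Fin n) (s : Fin d),
    (vin k n d o * Cm) i s =
      if h : (i : ℕ) + o < d then Cm ⟨(i : ℕ) + o, h⟩ s else 0)

set_option maxHeartbeats 1000000 in
include hmw hwm hmt htm in
lemma core_small {n d : ℕ} (hd : 0 < d) (hdn : d ≤ n)
    (μ : Fin d → k) (hμ : Function.Injective μ)
    (M : Matrix (Fin n) (Fin n) k) (Cm : Matrix (Fin d) (Fin d) k)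
    (h0 : M * win k n d 0 = win k n d 0 * Cm)
    (h1 : M * win k n d 1 = win k n d 1 * Cm)
    (h2 : M * twist k n d μ = twist k n d μ * Cm)
    (hcov : ∀ s : ℕ, d < s → s < n →
      ∃ o : ℕ, o ≤ s ∧ s < o + d ∧ o + d ≤ n ∧ M * win k n d o = win k n d o * Cm) :
    ∃ c : k, M = c • (1 : Matrix (Fin n) (Fin n) k) := by
  have hn : 0 < n := lt_of_lt_of_le hd hdn
  set Mf : ℕ → ℕ → k := fun i s => if h : i < n ∧ s < n then M ⟨i, h.1⟩ ⟨s, h.2⟩ else 0 with hMf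
  set Cf : ℕ → ℕ → k := fun s t => if h : s < d ∧ t < d then Cm ⟨s, h.1⟩ ⟨t, h.2⟩ else 0 with hCf
  have Mf_eq : ∀ (a b : ℕ) (p : a < n) (q : b < n), M ⟨a, p⟩ ⟨b, q⟩ = Mf a b := by
    intro a b p q
    simp only [hMf]
    rw [dif_pos (show a < n ∧ b < n from ⟨p, q⟩)]
  have Cf_eq : ∀ (a b : ℕ) (p : a < d) (q : b < d), Cm ⟨a, p⟩ ⟨b, q⟩ = Cf a b := by
    intro a b p q
    simp only [hCf]
    rw [dif_pos (show a < d ∧ b < d from ⟨p, q⟩)]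
  -- generic window entry relation
  have EW : ∀ o : ℕ, M * win k n d o = win k n d o * Cm →
      ∀ i t : ℕ, i < n → t < d →
        (if o + t < n then Mf i (o + t) else 0) =
        (if o ≤ i ∧ i - o < d then Cf (i - o) t else 0) := by
    intro o ho i t hi ht
    have h := congrFun (congrFun ho ⟨i, hi⟩) ⟨t, ht⟩
    rw [hmw, hwm] at h
    split_ifs with hc1 hc2 hc2
    · rw [dif_pos (show o + ((⟨t, ht⟩ : Fin d) : ℕ) < n from hc1),
        dif_pos (show o ≤ ((⟨i, hi⟩ : Fin n) : ℕ) ∧ ((⟨i, hi⟩ : Fin n) : ℕ) - o < d from hc2)] at h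
      rw [← Mf_eq _ _ hi hc1, ← Cf_eq _ _ hc2.2 ht]
      exact h
    · rw [dif_pos (show o + ((⟨t, ht⟩ : Fin d) : ℕ) < n from hc1),
        dif_neg (show ¬(o ≤ ((⟨i, hi⟩ : Fin n) : ℕ) ∧ ((⟨i, hi⟩ : Fin n) : ℕ) - o < d) from hc2)] at h
      rw [← Mf_eq _ _ hi hc1]
      exact h
    · rw [dif_neg (show ¬(o + ((⟨t, ht⟩ : Fin d) : ℕ) < n) from hc1),
        dif_pos (show o ≤ ((⟨i, hi⟩ : Fin n) : ℕ) ∧ ((⟨i, hi⟩ : Fin n) : ℕ) - o < d from hc2)] at h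
      rw [← Cf_eq _ _ hc2.2 ht]
      exact h.symm ▸ h
    · rfl
  -- twist relation : Cm commutes with diag ⇒ offdiag vanishing
  have Eoff : ∀ s t : ℕ, s < d → t < d → s ≠ t → Cf s t = 0 := by
    intro s t hs ht hst
    have hsn : s < n := by omega
    have h := congrFun (congrFun h2 ⟨s, hsn⟩) ⟨t, ht⟩
    rw [hmt hdn, htm] at h
    rw [dif_pos (show ((⟨s, hsn⟩ : Fin n) : ℕ) < d from hs)] at h
    rw [Mf_eq _ _ hsn (by omega), Cf_eq _ _ hs ht] at h
    have e0 := EW 0 h0 s t hsn ht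
    rw [if_pos (show 0 + t < n by omega), if_pos (show 0 ≤ s ∧ s - 0 < d by omega)] at e0
    simp only [Nat.zero_add, Nat.sub_zero] at e0
    rw [e0] at h
    have hμ' : μ ⟨((⟨s, hsn⟩ : Fin n) : ℕ), hs⟩ = μ ⟨s, hs⟩ := rfl
    rw [hμ'] at h
    have h3 : (μ ⟨t, ht⟩ - μ ⟨s, hs⟩) * Cf s t = 0 := by rw [sub_mul, h, sub_self]
    rcases mul_eq_zero.1 h3 with h4 | h4
    · exact absurd (congrArg Fin.val (hμ (sub_eq_zero.1 h4))) (by simpa using fun hh => hst hh.symm)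
    · exact h4
  -- diagonal of Cm constant
  have Ediag : ∀ a : ℕ, a < d → Cf a a = Cf 0 0 := by
    intro a
    induction a with
    | zero => intro _; rfl
    | succ b ih =>
      intro ha
      have e1 := EW 1 h1 (b + 1) b (by omega) (by omega)
      rw [if_pos (by omega : 1 + b < n), if_pos (by omega : 1 ≤ b + 1 ∧ b + 1 - 1 < d)] at e1
      simp only [Nat.add_sub_cancel] at e1
      have e0 := EW 0 h0 (b + 1) (b + 1) (by omega) ha
      rw [if_pos (by omega : 0 + (b + 1) < n), if_pos (by omega : 0 ≤ b + 1 ∧ b + 1 - 0 < d)] at e0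
      simp only [Nat.zero_add, Nat.sub_zero] at e0
      rw [show (1 + b) = b + 1 by omega] at e1
      rw [e0] at e1
      rw [e1]
      exact ih (by omega)
  set c := Cf 0 0 with hc
  have hCmc : ∀ s t : ℕ, s < d → t < d → Cf s t = if s = t then c else 0 := by
    intro s t hs ht
    by_cases hst : s = t
    · subst hst; rw [if_pos rfl]; exact Ediag s hs
    · rw [if_neg hst]; exact Eoff s t hs ht hst
  -- window column lemma
  have wincol : ∀ o : ℕ, M * win k n d o = win k n d o * Cm →
      ∀ t i : ℕ, t < d → i < n → o + t < n →
        Mf i (o + t) = if i = o + t then c else 0 := by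
    intro o ho t i ht hi hot
    have e := EW o ho i t hi ht
    rw [if_pos hot] at e
    rw [e]
    by_cases hcase : i = o + t
    · rw [if_pos (by omega : o ≤ i ∧ i - o < d), if_pos hcase]
      rw [hCmc _ _ (by omega) ht, if_pos (by omega)]
    · rw [if_neg hcase]
      by_cases h2c : o ≤ i ∧ i - o < d
      · rw [if_pos h2c, hCmc _ _ h2c.2 ht, if_neg (by omega)]
      · rw [if_neg h2c]
  refine ⟨c, ?_⟩
  ext i s
  rw [Matrix.smul_apply, Matrix.one_apply, Mf_eq _ _ i.2 s.2]
  have key : Mf (i : ℕ) (s : ℕ) = if (i : ℕ) = (s : ℕ) then c else 0 := by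
    rcases lt_trichotomy (s : ℕ) d with hlt | heq | hgt
    · have h := wincol 0 h0 (s : ℕ) (i : ℕ) hlt i.2 (by omega)
      rw [show 0 + (s : ℕ) = (s : ℕ) by omega] at h
      exact h
    · have hdlt : d < n := heq ▸ s.2
      have h := wincol 1 h1 (d - 1) (i : ℕ) (by omega) i.2 (by omega)
      rw [show 1 + (d - 1) = (s : ℕ) by omega] at h
      exact h
    · obtain ⟨o, ho1, ho2, ho3, ho4⟩ := hcov (s : ℕ) hgt s.2
      have h := wincol o ho4 ((s : ℕ) - o) (i : ℕ) (by omega) i.2 (by omega)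
      rw [show o + ((s : ℕ) - o) = (s : ℕ) by omega] at h
      exact h
  rw [key]
  by_cases his : i = s
  · subst his; rw [if_pos rfl, if_pos rfl, smul_eq_mul, mul_one]
  · rw [if_neg (fun hv => his (Fin.ext hv)), if_neg his, smul_zero]

include hmv hvm in
lemma core_large {n d : ℕ} (hn : 0 < n) (hnd : n + 1 ≤ d)
    (M : Matrix (Fin n) (Fin n) k) (Cm : Matrix (Fin d) (Fin d) k)
    (h0 : M * vin k n d 0 = vin k n d 0 * Cm)
    (h1 : M * vin k n d 1 = vin k n d 1 * Cm) :
    ∃ c : k, M = c • (1 : Matrix (Fin n) (Fin n) k) := by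
  set Mf : ℕ → ℕ → k := fun i s => if h : i < n ∧ s < n then M ⟨i, h.1⟩ ⟨s, h.2⟩ else 0 with hMf
  set Cf : ℕ → ℕ → k := fun s t => if h : s < d ∧ t < d then Cm ⟨s, h.1⟩ ⟨t, h.2⟩ else 0 with hCf
  have Mf_eq : ∀ (a b : ℕ) (p : a < n) (q : b < n), M ⟨a, p⟩ ⟨b, q⟩ = Mf a b := by
    intro a b p q
    simp only [hMf]
    rw [dif_pos (show a < n ∧ b < n from ⟨p, q⟩)]
  have Cf_eq : ∀ (a b : ℕ) (p : a < d) (q : b < d), Cm ⟨a, p⟩ ⟨b, q⟩ = Cf a b := by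
    intro a b p q
    simp only [hCf]
    rw [dif_pos (show a < d ∧ b < d from ⟨p, q⟩)]
  have EV : ∀ o : ℕ, M * vin k n d o = vin k n d o * Cm →
      ∀ i s : ℕ, i < n → s < d → i + o < d →
        (if o ≤ s ∧ s - o < n then Mf i (s - o) else 0) = Cf (i + o) s := by
    intro o ho i s hi hs hio
    have h := congrFun (congrFun ho ⟨i, hi⟩) ⟨s, hs⟩
    rw [hmv, hvm] at h
    rw [dif_pos (show ((⟨i, hi⟩ : Fin n) : ℕ) + o < d from hio)] at h
    rw [Cf_eq _ _ hio hs] at h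
    split_ifs with hc1
    · rw [dif_pos (show o ≤ ((⟨s, hs⟩ : Fin d) : ℕ) ∧ ((⟨s, hs⟩ : Fin d) : ℕ) - o < n from hc1)] at h
      rw [← Mf_eq _ _ hi hc1.2]
      exact h
    · rw [dif_neg (show ¬(o ≤ ((⟨s, hs⟩ : Fin d) : ℕ) ∧ ((⟨s, hs⟩ : Fin d) : ℕ) - o < n) from hc1)] at h
      exact h
  -- basic facts
  have ha : ∀ i : ℕ, 0 < i → i < n → Mf i 0 = 0 := by
    intro i hi1 hi2
    have e0 := EV 0 h0 i 0 hi2 (by omega) (by omega)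
    rw [if_pos (by omega), Nat.sub_zero, Nat.add_zero] at e0
    have e1 := EV 1 h1 (i - 1) 0 (by omega) (by omega) (by omega)
    rw [if_neg (by omega), show i - 1 + 1 = i by omega] at e1
    rw [e0, ← e1]
  have hb : ∀ i s : ℕ, i + 1 < n → s + 1 < n → Mf (i + 1) (s + 1) = Mf i s := by
    intro i s hi hs
    have e0 := EV 0 h0 (i + 1) (s + 1) hi (by omega) (by omega)
    rw [if_pos (by omega), Nat.sub_zero, Nat.add_zero] at e0
    have e1 := EV 1 h1 i (s + 1) (by omega) (by omega) (by omega)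
    rw [if_pos (by omega), Nat.add_sub_cancel] at e1
    rw [e0, ← e1]
  have hc : ∀ i : ℕ, i + 1 < n → Mf i (n - 1) = 0 := by
    intro i hi
    have e0 := EV 0 h0 (i + 1) n hi (by omega) (by omega)
    rw [if_neg (by omega), Nat.add_zero] at e0
    have e1 := EV 1 h1 i n (by omega) (by omega) (by omega)
    rw [if_pos (by omega)] at e1
    rw [e1, ← e0]
  -- diag
  have hdiag : ∀ i : ℕ, i < n → Mf i i = Mf 0 0 := by
    intro i
    induction i with
    | zero => intro _; rfl
    | succ b ih => intro hi; rw [hb b b hi hi]; exact ih (by omega)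
  have hbelow : ∀ s i : ℕ, s < n → i < n → s < i → Mf i s = 0 := by
    intro s
    induction s with
    | zero => intro i hs hi hlt; exact ha i hlt hi
    | succ b ih =>
      intro i hs hi hlt
      rw [show i = (i - 1) + 1 by omega, hb (i - 1) b (by omega) hs]
      exact ih (i - 1) (by omega) (by omega) (by omega)
  have habove : ∀ g i s : ℕ, i < n → s < n → i < s → n - 1 - s = g → Mf i s = 0 := by
    intro g
    induction g with
    | zero =>
      intro i s hi hs hlt hg
      rw [show s = n - 1 by omega]
      exact hc i (by omega)
    | succ b ih =>
      intro i s hi hs hlt hg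
      rw [← hb i s (by omega) (by omega)]
      exact ih (i + 1) (s + 1) (by omega) (by omega) (by omega) (by omega)
  refine ⟨Mf 0 0, ?_⟩
  ext i s
  rw [Matrix.smul_apply, Matrix.one_apply, Mf_eq _ _ i.2 s.2]
  rcases lt_trichotomy (i : ℕ) (s : ℕ) with hlt | heq | hgt
  · rw [if_neg (by rw [Fin.ext_iff]; omega), smul_zero]
    exact habove (n - 1 - (s : ℕ)) (i : ℕ) (s : ℕ) i.2 s.2 hlt rfl
  · rw [if_pos (Fin.ext heq), smul_eq_mul, mul_one, heq]
    exact hdiag (s : ℕ) s.2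
  · rw [if_neg (by rw [Fin.ext_iff]; omega), smul_zero]
    exact hbelow (s : ℕ) (i : ℕ) s.2 i.2 hgt

end core2



section infra
variable {k U W : Type*} [Field k] [AddCommGroup U] [Module k U] [AddCommGroup W] [Module k W]
variable {n m d : ℕ}

/-- component projection `U ⊗ W → U` along the basis vector `bW j` -/
noncomputable def pr (bW : Module.Basis (Fin m) k W) (j : Fin m) : TensorProduct k U W →ₗ[k] U :=
  (TensorProduct.rid k U).toLinearMap ∘ₗ (LinearMap.lTensor U (bW.coord j))

lemma pr_tmul (bW : Module.Basis (Fin m) k W) (j : Fin m) (u : U) (w : W) :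
    pr bW j (u ⊗ₜ[k] w) = bW.coord j w • u := by
  simp [pr]

lemma pr_rTensor (bW : Module.Basis (Fin m) k W) (j : Fin m) (φ : U →ₗ[k] U) (z : TensorProduct k U W) :
    pr bW j (LinearMap.rTensor W φ z) = φ (pr bW j z) := by
  have h : (pr bW j) ∘ₗ (LinearMap.rTensor W φ) = φ ∘ₗ pr (U := U) bW j := by
    apply TensorProduct.ext'
    intro u w
    simp [pr_tmul, _root_.map_smul]
  exact LinearMap.congr_fun h z

noncomputable def Gmap (bU : Module.Basis (Fin n) k U) (A : Fin m → Matrix (Fin n) (Fin d) k)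
    (j : Fin m) : (Fin d → k) →ₗ[k] U :=
  Matrix.toLin (Pi.basisFun k (Fin d)) bU (A j)

lemma Gmap_apply (bU : Module.Basis (Fin n) k U) (A : Fin m → Matrix (Fin n) (Fin d) k)
    (j : Fin m) (x : Fin d → k) :
    Gmap bU A j x = bU.equivFun.symm ((A j) *ᵥ x) := by
  rw [Gmap, Matrix.toLin_apply, Module.Basis.equivFun_symm_apply]
  have h : ⇑((Pi.basisFun k (Fin d)).repr x) = x := by
    funext t; exact Pi.basisFun_repr k (Fin d) x t
  rw [h]

noncomputable def Bmap (bU : Module.Basis (Fin n) k U) (bW : Module.Basis (Fin m) k W)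
    (A : Fin m → Matrix (Fin n) (Fin d) k) : (Fin d → k) →ₗ[k] TensorProduct k U W :=
  ∑ j : Fin m, (((TensorProduct.mk k U W).flip (bW j)) ∘ₗ Gmap bU A j)

lemma pr_Bmap (bU : Module.Basis (Fin n) k U) (bW : Module.Basis (Fin m) k W)
    (A : Fin m → Matrix (Fin n) (Fin d) k) (j' : Fin m) (x : Fin d → k) :
    pr bW j' (Bmap bU bW A x) = Gmap bU A j' x := by
  simp only [Bmap, LinearMap.sum_apply, LinearMap.comp_apply, map_sum]
  have h : ∀ j : Fin m, pr bW j' ((TensorProduct.mk k U W).flip (bW j) (Gmap bU A j x))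
      = (if j = j' then (1 : k) else 0) • Gmap bU A j x := by
    intro j
    rw [show (TensorProduct.mk k U W).flip (bW j) (Gmap bU A j x)
        = (Gmap bU A j x) ⊗ₜ[k] (bW j) from rfl]
    rw [pr_tmul]
    congr 1
    rw [Module.Basis.coord_apply, Module.Basis.repr_self, Finsupp.single_apply]
  simp_rw [h]
  rw [Finset.sum_eq_single j']
  · simp
  · intro b _ hb; simp [hb]
  · simp

theorem range_case (bU : Module.Basis (Fin n) k U) (bW : Module.Basis (Fin m) k W)
    (A : Fin m → Matrix (Fin n) (Fin d) k)
    (hInj : ∀ x : Fin d → k, (∀ j, (A j) *ᵥ x = 0) → x = 0)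
    (hCore : ∀ (M : Matrix (Fin n) (Fin n) k) (Cm : Matrix (Fin d) (Fin d) k),
      (∀ j, M * A j = A j * Cm) → ∃ c : k, M = c • 1) :
    ∃ L : Submodule k (TensorProduct k U W), Module.finrank k L = d ∧ Anchors k U W L := by
  have hB : Function.Injective (Bmap bU bW A) := by
    rw [injective_iff_map_eq_zero]
    intro x hx
    apply hInj
    intro j
    have h1 : Gmap bU A j x = 0 := by rw [← pr_Bmap bU bW A j x, hx, map_zero]
    rw [Gmap_apply] at h1
    have h2 : bU.equivFun.symm ((A j) *ᵥ x) = bU.equivFun.symm 0 := by rw [h1, map_zero]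
    exact bU.equivFun.symm.injective h2
  refine ⟨LinearMap.range (Bmap bU bW A), ?_, ?_⟩
  · rw [LinearMap.finrank_range_of_inj hB]
    simp [Module.finrank_pi]
  · intro φ hφ
    have hmem : ∀ y : Fin d → k,
        (LinearMap.rTensor W φ) (Bmap bU bW A y) ∈ LinearMap.range (Bmap bU bW A) := by
      intro y
      exact hφ _ (LinearMap.mem_range_self _ y)
    set e := LinearEquiv.ofInjective (Bmap bU bW A) hB with he
    set C : (Fin d → k) →ₗ[k] (Fin d → k) :=
      e.symm.toLinearMap ∘ₗ LinearMap.codRestrict (LinearMap.range (Bmap bU bW A))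
        ((LinearMap.rTensor W φ) ∘ₗ Bmap bU bW A) (fun y => hmem y) with hC
    have hBC : ∀ x, Bmap bU bW A (C x) = LinearMap.rTensor W φ (Bmap bU bW A x) := by
      intro x
      have h2 : e (C x) = ⟨LinearMap.rTensor W φ (Bmap bU bW A x), hmem x⟩ := by
        rw [hC]
        simp only [LinearMap.comp_apply, LinearEquiv.coe_coe]
        rw [LinearEquiv.apply_symm_apply]
        apply Subtype.ext
        rw [LinearMap.codRestrict_apply]
        rfl
      have h1 : (e (C x) : TensorProduct k U W) = Bmap bU bW A (C x) := by
        rw [he, LinearEquiv.ofInjective_apply]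
      rw [← h1, h2]
    have hGC : ∀ j, φ ∘ₗ Gmap bU A j = Gmap bU A j ∘ₗ C := by
      intro j
      apply LinearMap.ext
      intro x
      have h1 : pr bW j (Bmap bU bW A (C x)) = Gmap bU A j (C x) := pr_Bmap bU bW A j (C x)
      have h2 : pr bW j (LinearMap.rTensor W φ (Bmap bU bW A x))
          = φ (pr bW j (Bmap bU bW A x)) := pr_rTensor bW j φ _
      simp only [LinearMap.comp_apply]
      rw [← h1, hBC, h2, pr_Bmap]
    set P := LinearMap.toMatrix bU bU φ with hP
    set Cmat := LinearMap.toMatrix (Pi.basisFun k (Fin d)) (Pi.basisFun k (Fin d)) C with hCmat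
    have hPA : ∀ j, P * A j = A j * Cmat := by
      intro j
      have h1 : LinearMap.toMatrix (Pi.basisFun k (Fin d)) bU (φ ∘ₗ Gmap bU A j)
          = P * A j := by
        rw [LinearMap.toMatrix_comp (Pi.basisFun k (Fin d)) bU bU, hP, Gmap,
          LinearMap.toMatrix_toLin]
      have h2 : LinearMap.toMatrix (Pi.basisFun k (Fin d)) bU (Gmap bU A j ∘ₗ C)
          = A j * Cmat := by
        rw [LinearMap.toMatrix_comp (Pi.basisFun k (Fin d)) (Pi.basisFun k (Fin d)) bU, hCmat,
          Gmap, LinearMap.toMatrix_toLin]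
      rw [← h1, ← h2, hGC j]
    obtain ⟨c, hc⟩ := hCore P Cmat hPA
    refine ⟨c, ?_⟩
    have h3 := congrArg (Matrix.toLin bU bU) hc
    rw [hP, Matrix.toLin_toMatrix, _root_.map_smul, Matrix.toLin_one] at h3
    exact h3

end infra




section kern
variable {k U W : Type*} [Field k] [AddCommGroup U] [Module k U] [AddCommGroup W] [Module k W]
variable {n m e : ℕ}

noncomputable def Fmap (bU : Module.Basis (Fin n) k U) (bW : Module.Basis (Fin m) k W)
    (A : Fin m → Matrix (Fin n) (Fin e) k) : TensorProduct k U W →ₗ[k] (Fin e → k) :=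
  LinearMap.pi (fun s => ∑ j : Fin m, ∑ i : Fin n, (A j i s) • (bU.coord i ∘ₗ pr bW j))

lemma Fmap_apply (bU : Module.Basis (Fin n) k U) (bW : Module.Basis (Fin m) k W)
    (A : Fin m → Matrix (Fin n) (Fin e) k) (z : TensorProduct k U W) (s : Fin e) :
    Fmap bU bW A z s = ∑ j : Fin m, ∑ i : Fin n, (A j i s) * (bU.coord i (pr bW j z)) := by
  simp [Fmap, LinearMap.pi_apply]

lemma Fmap_tmul (bU : Module.Basis (Fin n) k U) (bW : Module.Basis (Fin m) k W)
    (A : Fin m → Matrix (Fin n) (Fin e) k) (i' : Fin n) (j' : Fin m) (s : Fin e) :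
    Fmap bU bW A ((bU i') ⊗ₜ[k] (bW j')) s = A j' i' s := by
  rw [Fmap_apply]
  have h : ∀ (j : Fin m) (i : Fin n),
      (A j i s) * (bU.coord i (pr bW j ((bU i') ⊗ₜ[k] (bW j'))))
      = (if j' = j then 1 else 0) * (if i' = i then A j i s else 0) := by
    intro j i
    rw [pr_tmul, _root_.map_smul, Module.Basis.coord_apply, Module.Basis.coord_apply, Module.Basis.repr_self,
      Module.Basis.repr_self, Finsupp.single_apply, Finsupp.single_apply]
    simp only [smul_eq_mul]
    split_ifs <;> ring
  simp_rw [h, boole_mul]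
  simp [Finset.sum_ite_eq]

noncomputable def Smap (bU : Module.Basis (Fin n) k U) (bW : Module.Basis (Fin m) k W)
    (hen : e ≤ n) (hm : 0 < m) : (Fin e → k) →ₗ[k] TensorProduct k U W :=
  ∑ t : Fin e, LinearMap.smulRight (LinearMap.proj t)
    ((bU ⟨(t : ℕ), lt_of_lt_of_le t.2 hen⟩) ⊗ₜ[k] bW ⟨0, hm⟩)

lemma Fmap_Smap (bU : Module.Basis (Fin n) k U) (bW : Module.Basis (Fin m) k W)
    (A : Fin m → Matrix (Fin n) (Fin e) k) (hen : e ≤ n) (hm : 0 < m)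
    (hA0 : A ⟨0, hm⟩ = win k n e 0) (c : Fin e → k) :
    Fmap bU bW A (Smap bU bW hen hm c) = c := by
  funext s
  rw [Smap]
  simp only [LinearMap.sum_apply, map_sum, LinearMap.smulRight_apply, LinearMap.proj_apply,
    _root_.map_smul, Finset.sum_apply, Pi.smul_apply, smul_eq_mul]
  have h : ∀ t : Fin e,
      Fmap bU bW A ((bU ⟨(t : ℕ), lt_of_lt_of_le t.2 hen⟩) ⊗ₜ[k] bW ⟨0, hm⟩) s
      = if t = s then 1 else 0 := by
    intro t
    rw [Fmap_tmul, hA0]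
    simp only [win, Matrix.of_apply]
    congr 1
    simp only [eq_iff_iff, Fin.ext_iff]
    omega
  simp_rw [h, mul_boole]
  rw [Finset.sum_ite_eq']
  simp

theorem kernel_case [FiniteDimensional k U] [FiniteDimensional k W]
    (bU : Module.Basis (Fin n) k U) (bW : Module.Basis (Fin m) k W)
    (A : Fin m → Matrix (Fin n) (Fin e) k) (hm : 0 < m) (hen : e ≤ n)
    (hA0 : A ⟨0, hm⟩ = win k n e 0)
    (hCore : ∀ (M : Matrix (Fin n) (Fin n) k) (Cm : Matrix (Fin e) (Fin e) k),
      (∀ j, M * A j = A j * Cm) → ∃ c : k, M = c • 1) :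
    ∃ L : Submodule k (TensorProduct k U W),
      Module.finrank k L + e = n * m ∧ Anchors k U W L := by
  set F := Fmap bU bW A with hF
  have hFS : ∀ c, F (Smap bU bW hen hm c) = c := Fmap_Smap bU bW A hen hm hA0
  refine ⟨LinearMap.ker F, ?_, ?_⟩
  · have hsur : LinearMap.range F = ⊤ := by
      rw [LinearMap.range_eq_top]
      exact fun c => ⟨Smap bU bW hen hm c, hFS c⟩
    have h1 := LinearMap.finrank_range_add_finrank_ker F
    rw [hsur] at h1
    have h2 : Module.finrank k (⊤ : Submodule k (Fin e → k)) = e := by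
      rw [finrank_top]
      simp [Module.finrank_pi]
    have h3 : Module.finrank k (TensorProduct k U W) = n * m := by
      rw [Module.finrank_tensorProduct, Module.finrank_eq_card_basis bU,
        Module.finrank_eq_card_basis bW]
      simp
    omega
  · intro φ hφ
    set P := LinearMap.toMatrix bU bU φ with hP
    set S := Smap bU bW hen hm with hS
    set D : Matrix (Fin e) (Fin e) k :=
      Matrix.of fun s s' => F (LinearMap.rTensor W φ (S (fun j => if s' = j then 1 else 0))) s
        with hD
    -- factorization
    have hfact : ∀ (z : TensorProduct k U W) (s : Fin e),
        F (LinearMap.rTensor W φ z) s = ∑ s' : Fin e, (F z s') * D s s' := by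
      intro z s
      have hz0 : F (z - S (F z)) = 0 := by
        rw [map_sub, hFS, sub_self]
      have hker : F (LinearMap.rTensor W φ (z - S (F z))) = 0 := by
        have hmem : z - S (F z) ∈ LinearMap.ker F := hz0
        exact hφ _ hmem
      have h1 : F (LinearMap.rTensor W φ z) s = F (LinearMap.rTensor W φ (S (F z))) s := by
        have := congrFun hker s
        rw [map_sub, map_sub] at this
        simp only [Pi.sub_apply, Pi.zero_apply] at this
        exact sub_eq_zero.mp this
      rw [h1]
      -- expand S (F z) via pi_apply_eq_sum_univ on the composite
      set g : (Fin e → k) →ₗ[k] k :=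
        (LinearMap.proj s) ∘ₗ F ∘ₗ (LinearMap.rTensor W φ) ∘ₗ S with hg
      have h2 : F (LinearMap.rTensor W φ (S (F z))) s = g (F z) := rfl
      rw [h2, LinearMap.pi_apply_eq_sum_univ g (F z)]
      apply Finset.sum_congr rfl
      intro s' _
      rw [smul_eq_mul, hD]
      rfl
    -- basis tensor relation
    have hphi : ∀ i' : Fin n, φ (bU i') = ∑ i : Fin n, P i i' • bU i := by
      intro i'
      have := Module.Basis.sum_equivFun bU (φ (bU i'))
      rw [← this]
      congr 1
      funext i
      rw [hP, LinearMap.toMatrix_apply, Module.Basis.equivFun_apply]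
    have hrel : ∀ (j' : Fin m) (s : Fin e) (i' : Fin n),
        (∑ i : Fin n, A j' i s * P i i') = ∑ s' : Fin e, A j' i' s' * D s s' := by
      intro j' s i'
      have h1 := hfact ((bU i') ⊗ₜ[k] (bW j')) s
      rw [LinearMap.rTensor_tmul] at h1
      rw [hphi i'] at h1
      have h2 : (∑ i : Fin n, P i i' • bU i) ⊗ₜ[k] (bW j')
          = ∑ i : Fin n, P i i' • ((bU i) ⊗ₜ[k] (bW j')) := by
        rw [TensorProduct.sum_tmul]
        apply Finset.sum_congr rfl
        intro i _
        rw [TensorProduct.smul_tmul']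
      rw [h2, map_sum] at h1
      simp only [_root_.map_smul, Finset.sum_apply, Pi.smul_apply, smul_eq_mul] at h1
      have h3 : ∀ i : Fin n, P i i' * (F ((bU i) ⊗ₜ[k] (bW j'))) s = A j' i s * P i i' := by
        intro i
        rw [hF, Fmap_tmul]
        ring
      simp_rw [h3] at h1
      have h4 : ∀ s' : Fin e, (F ((bU i') ⊗ₜ[k] (bW j'))) s' * D s s' = A j' i' s' * D s s' := by
        intro s'
        rw [hF, Fmap_tmul]
      simp_rw [h4] at h1
      exact h1
    have hmat : ∀ j : Fin m, Pᵀ * A j = A j * Dᵀ := by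
      intro j
      have h5 : (A j)ᵀ * P = D * (A j)ᵀ := by
        ext s i'
        rw [Matrix.mul_apply, Matrix.mul_apply]
        have l : ∀ i : Fin n, (A j)ᵀ s i * P i i' = A j i s * P i i' := by
          intro i; rw [Matrix.transpose_apply]
        have r : ∀ s' : Fin e, D s s' * (A j)ᵀ s' i' = A j i' s' * D s s' := by
          intro s'; rw [Matrix.transpose_apply]; ring
        simp_rw [l, r]
        exact hrel j s i'
      have h6 := congrArg Matrix.transpose h5
      rw [Matrix.transpose_mul, Matrix.transpose_mul, Matrix.transpose_transpose] at h6
      exact h6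
    obtain ⟨c, hc⟩ := hCore Pᵀ Dᵀ hmat
    refine ⟨c, ?_⟩
    have hc2 : P = c • 1 := by
      have := congrArg Matrix.transpose hc
      rw [Matrix.transpose_transpose, Matrix.transpose_smul, Matrix.transpose_one] at this
      exact this
    have h3 := congrArg (Matrix.toLin bU bU) hc2
    rw [hP, Matrix.toLin_toMatrix, _root_.map_smul, Matrix.toLin_one] at h3
    exact h3

end kern

section asm
variable {k : Type*} [Field k]
variable {n m d : ℕ}

lemma fin_mk_eq {d : ℕ} {a : ℕ} (h : a < d) (t : Fin d) (he : a = (t : ℕ)) :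
    (⟨a, h⟩ : Fin d) = t := Fin.ext he

/-- mulVec of injection window -/
lemma win_mulVec {o : ℕ} (x : Fin d → k) (i : Fin n) :
    (win k n d o *ᵥ x) i =
      if h : o ≤ (i : ℕ) ∧ (i : ℕ) - o < d then x ⟨(i : ℕ) - o, h.2⟩ else 0 := by
  rw [Matrix.mulVec, dotProduct]
  have h : ∀ s : Fin d, win k n d o i s * x s
      = if (s : ℕ) = (i : ℕ) - o ∧ o ≤ (i : ℕ) then x s else 0 := by
    intro s
    simp only [win, Matrix.of_apply, ite_mul, one_mul, zero_mul]
    congr 1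
    simp only [eq_iff_iff]; omega
  simp_rw [h]
  split_ifs with hc
  · rw [Finset.sum_eq_single (⟨(i : ℕ) - o, hc.2⟩ : Fin d)]
    · simp [hc.1]
    · intro b _ hb
      simp only [ite_eq_right_iff]
      intro hba; exact absurd (Fin.ext hba.1) hb
    · simp
  · apply Finset.sum_eq_zero
    intro b _
    simp only [ite_eq_right_iff]
    rintro ⟨h1, h2⟩
    exact absurd ⟨h2, h1 ▸ b.2⟩ hc

/-- mulVec of projection window -/
lemma vin_mulVec {o : ℕ} (x : Fin d → k) (i : Fin n) :
    (vin k n d o *ᵥ x) i = if h : (i : ℕ) + o < d then x ⟨(i : ℕ) + o, h⟩ else 0 := by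
  rw [Matrix.mulVec, dotProduct]
  have h : ∀ s : Fin d, vin k n d o i s * x s
      = if (s : ℕ) = (i : ℕ) + o then x s else 0 := by
    intro s; simp [vin, ite_mul]
  simp_rw [h]
  exact sum_ite_nat _ _

lemma win0_mulVec (x : Fin d → k) (iv : ℕ) (hi : iv < n) (t : Fin d) (ht : iv = (t : ℕ)) :
    (win k n d 0 *ᵥ x) ⟨iv, hi⟩ = x t := by
  rw [win_mulVec, dif_pos (show 0 ≤ ((⟨iv, hi⟩ : Fin n) : ℕ) ∧
      ((⟨iv, hi⟩ : Fin n) : ℕ) - 0 < d from ⟨Nat.zero_le _, by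
        show iv - 0 < d
        have := t.2
        omega⟩)]
  congr 1
  apply Fin.ext
  show iv - 0 = (t : ℕ)
  omega

lemma vin_mulVec' {o : ℕ} (x : Fin d → k) (iv : ℕ) (hi : iv < n) (t : Fin d)
    (ht : iv + o = (t : ℕ)) : (vin k n d o *ᵥ x) ⟨iv, hi⟩ = x t := by
  rw [vin_mulVec, dif_pos (show ((⟨iv, hi⟩ : Fin n) : ℕ) + o < d from by
    show iv + o < d
    have := t.2
    omega)]
  congr 1
  exact Fin.ext ht

/-- the "small" family of matrices (used when d ≤ n, and for the kernel case) -/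
def Asmall (k : Type*) [Field k] (n d m : ℕ) (μ : Fin d → k) :
    Fin m → Matrix (Fin n) (Fin d) k := fun j =>
  if (j : ℕ) = 0 then win k n d 0
  else if (j : ℕ) = 1 then win k n d 1
  else if (j : ℕ) = 2 then twist k n d μ
  else win k n d (min (((j : ℕ) - 2) * d + 1) (n - d))

lemma Asmall_at (μ : Fin d → k) (j : Fin m) (jv : ℕ) (hjv : (j : ℕ) = jv) :
    Asmall k n d m μ j =
      if jv = 0 then win k n d 0
      else if jv = 1 then win k n d 1
      else if jv = 2 then twist k n d μ
      else win k n d (min ((jv - 2) * d + 1) (n - d)) := by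
  simp only [Asmall, hjv]

lemma Asmall_zero (hm : 0 < m) (μ : Fin d → k) :
    Asmall k n d m μ ⟨0, hm⟩ = win k n d 0 := by
  rw [Asmall_at μ _ 0 rfl]; simp

lemma Asmall_inj (hm : 0 < m) (hdn : d ≤ n) (μ : Fin d → k) :
    ∀ x : Fin d → k, (∀ j : Fin m, Asmall k n d m μ j *ᵥ x = 0) → x = 0 := by
  intro x hx
  funext t
  have h0 := congrFun (hx ⟨0, hm⟩) ⟨(t : ℕ), lt_of_lt_of_le t.2 hdn⟩
  rw [Asmall_zero hm μ, win0_mulVec x (t : ℕ) _ t rfl] at h0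
  exact h0

lemma Asmall_core (hm : 4 ≤ m) (hd : 0 < d) (hdn : d ≤ n) (hcov : n < (m - 2) * d)
    (μ : Fin d → k) (hμ : Function.Injective μ) :
    ∀ (M : Matrix (Fin n) (Fin n) k) (Cm : Matrix (Fin d) (Fin d) k),
      (∀ j : Fin m, M * Asmall k n d m μ j = Asmall k n d m μ j * Cm) →
      ∃ c : k, M = c • 1 := by
  intro M Cm h
  apply core_small (fun M i t => mul_win_apply M i t) (fun Cm i t => win_mul_apply Cm i t)
    (fun hdn μ M i t => mul_twist_apply hdn μ M i t)
    (fun μ Cm i t => twist_mul_apply μ Cm i t) hd hdn μ hμ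
  · have := h ⟨0, by omega⟩; rw [Asmall_at μ _ 0 rfl] at this; simpa using this
  · have := h ⟨1, by omega⟩; rw [Asmall_at μ _ 1 rfl] at this; simpa using this
  · have := h ⟨2, by omega⟩; rw [Asmall_at μ _ 2 rfl] at this; simpa using this
  · intro s hds hsn
    obtain ⟨B, hB⟩ : ∃ B, (m - 2) * d = B := ⟨_, rfl⟩
    rw [hB] at hcov
    obtain ⟨q, a, r, hqr, hrd, ha⟩ :
        ∃ q a r : ℕ, a + r = s - d - 1 ∧ r < d ∧ d * q = a :=
      ⟨(s - d - 1) / d, d * ((s - d - 1) / d), (s - d - 1) % d,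
        by rw [Nat.div_add_mod], Nat.mod_lt _ hd, rfl⟩
    have hjm : 3 + q < m := by
      have h1 : d * (q + 1) < d * (m - 2) := by
        rw [Nat.mul_succ, ha, show d * (m - 2) = (m - 2) * d from Nat.mul_comm _ _, hB]
        omega
      have h2 := Nat.lt_of_mul_lt_mul_left h1
      omega
    refine ⟨min (a + d + 1) (n - d), by omega, by omega, by omega, ?_⟩
    have hAj : Asmall k n d m μ ⟨3 + q, hjm⟩
        = win k n d (min (a + d + 1) (n - d)) := by
      rw [Asmall_at μ _ (3 + q) rfl]
      rw [if_neg (by omega), if_neg (by omega), if_neg (by omega)]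
      have hoff : (3 + q - 2) * d + 1 = a + d + 1 := by
        rw [show (3 + q : ℕ) - 2 = q + 1 from by omega, Nat.succ_mul, Nat.mul_comm q d, ha]
      rw [hoff]
    have hw := h ⟨3 + q, hjm⟩
    rw [hAj] at hw
    exact hw

/-- the "large" family of matrices (used when n + 1 ≤ d ≤ m*n - n + 1) -/
def Avin (k : Type*) [Field k] (n d m : ℕ) : Fin m → Matrix (Fin n) (Fin d) k := fun j =>
  if (j : ℕ) = 0 then vin k n d 0
  else vin k n d (min (((j : ℕ) - 1) * n + 1) (d - n))

lemma Avin_at (j : Fin m) (jv : ℕ) (hjv : (j : ℕ) = jv) :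
    Avin k n d m j =
      if jv = 0 then vin k n d 0
      else vin k n d (min ((jv - 1) * n + 1) (d - n)) := by
  simp only [Avin, hjv]

lemma Avin_core (hm : 4 ≤ m) (hn : 0 < n) (hnd : n + 1 ≤ d) :
    ∀ (M : Matrix (Fin n) (Fin n) k) (Cm : Matrix (Fin d) (Fin d) k),
      (∀ j : Fin m, M * Avin k n d m j = Avin k n d m j * Cm) →
      ∃ c : k, M = c • 1 := by
  intro M Cm h
  apply core_large (fun M i s => mul_vin_apply M i s) (fun Cm i s => vin_mul_apply Cm i s)
    hn hnd
  · have := h ⟨0, by omega⟩; rw [Avin_at _ 0 rfl] at this; simpa using this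
  · have hw := h ⟨1, by omega⟩
    have hA : Avin k n d m ⟨1, by omega⟩ = vin k n d 1 := by
      rw [Avin_at _ 1 rfl, if_neg (by omega)]
      have hoff : min ((1 - 1) * n + 1) (d - n) = 1 := by
        rw [Nat.sub_self, Nat.zero_mul, Nat.zero_add]
        omega
      rw [hoff]
    rw [hA] at hw
    exact hw

lemma Avin_inj (hm : 4 ≤ m) (hn : 0 < n) (hnd : n + 1 ≤ d) (hdm : d ≤ m * n - n + 1) :
    ∀ x : Fin d → k, (∀ j : Fin m, Avin k n d m j *ᵥ x = 0) → x = 0 := by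
  intro x hx
  funext t
  obtain ⟨N, hN⟩ : ∃ N, m * n = N := ⟨_, rfl⟩
  have hNn : n + 1 ≤ N := by
    have : 1 * n ≤ m * n := Nat.mul_le_mul_right n (by omega)
    omega
  rw [hN] at hdm
  rcases lt_or_ge (t : ℕ) n with htn | htn
  · have h0 := congrFun (hx ⟨0, by omega⟩) ⟨(t : ℕ), htn⟩
    have hA : Avin k n d m ⟨0, by omega⟩ = vin k n d 0 := by
      rw [Avin_at _ 0 rfl]; simp
    rw [hA, vin_mulVec' x (t : ℕ) htn t (by omega)] at h0
    exact h0
  · rcases le_or_gt (d - n) (t : ℕ) with htd | htd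
    · -- capped window j = m - 1 with offset d - n
      have hmn : d - n ≤ (m - 2) * n + 1 := by
        have e1 : (m - 2) * n + 2 * n = m * n := by
          obtain ⟨m', rfl⟩ : ∃ m', m = m' + 2 := ⟨m - 2, by omega⟩
          rw [Nat.add_sub_cancel, ← Nat.add_mul]
        rw [hN] at e1
        omega
      have hj : ((m : ℕ) - 1) < m := by omega
      have hAj : Avin k n d m ⟨m - 1, hj⟩ = vin k n d (d - n) := by
        rw [Avin_at _ (m - 1) rfl, if_neg (by omega)]
        have hoff : min ((m - 1 - 1) * n + 1) (d - n) = d - n := by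
          rw [show (m - 1 : ℕ) - 1 = m - 2 from by omega]
          omega
        rw [hoff]
      have h0 := congrFun (hx ⟨m - 1, hj⟩) ⟨(t : ℕ) - (d - n), by omega⟩
      rw [hAj, vin_mulVec' x ((t : ℕ) - (d - n)) (by omega) t (by omega)] at h0
      exact h0
    · -- uncapped window
      obtain ⟨q, a, r, hqr, hrn, ha⟩ :
          ∃ q a r : ℕ, a + r = (t : ℕ) - 1 ∧ r < n ∧ n * q = a :=
        ⟨((t : ℕ) - 1) / n, n * (((t : ℕ) - 1) / n), ((t : ℕ) - 1) % n,
          by rw [Nat.div_add_mod], Nat.mod_lt _ hn, rfl⟩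
      have hjm : 1 + q < m := by
        have h1 : n * (q + 1) ≤ n * (m - 1) := by
          rw [Nat.mul_succ, ha]
          have e2 : n * (m - 1) + n = n * m := by rw [← Nat.mul_succ]; congr 1; omega
          have e3 : n * m = m * n := Nat.mul_comm _ _
          rw [e3, hN] at e2
          omega
        have h2 := Nat.le_of_mul_le_mul_left h1 hn
        omega
      have hAj : Avin k n d m ⟨1 + q, hjm⟩ = vin k n d (a + 1) := by
        rw [Avin_at _ (1 + q) rfl, if_neg (by omega)]
        have hoff : min ((1 + q - 1) * n + 1) (d - n) = a + 1 := by
          rw [show (1 + q : ℕ) - 1 = q from by omega, Nat.mul_comm q n, ha]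
          omega
        rw [hoff]
      have h0 := congrFun (hx ⟨1 + q, hjm⟩) ⟨(t : ℕ) - (a + 1), by omega⟩
      rw [hAj, vin_mulVec' x ((t : ℕ) - (a + 1)) (by omega) t (by omega)] at h0
      exact h0

end asm

section final

lemma covlemma {n m d : ℕ} (hm : 4 ≤ m) (h : 2 * n < d * m) : n < (m - 2) * d := by
  have w1 : (m - 2) * (2 * n) < (m - 2) * (d * m) :=
    mul_lt_mul_of_pos_left h (by omega)
  have w2 : (m - 2) * (d * m) = m * ((m - 2) * d) := by ring
  have w3 : m * n ≤ (m - 2) * (2 * n) := by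
    obtain ⟨m', rfl⟩ : ∃ m', m = m' + 2 := ⟨m - 2, by omega⟩
    rw [Nat.add_sub_cancel]
    have h2 : 2 ≤ m' := by omega
    calc (m' + 2) * n = m' * n + 2 * n := by ring
      _ ≤ m' * n + m' * n := by
          have := Nat.mul_le_mul_right n h2
          omega
      _ = m' * (2 * n) := by ring
  have w4 : m * n < m * ((m - 2) * d) := by omega
  exact Nat.lt_of_mul_lt_mul_left w4

/-- For dim U = n ≥ 2, dim W = m ≥ 4 and 2n/m < d < nm − 2n/m, there exists a
d-dimensional subspace of U ⊗ W anchoring U. -/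
theorem stmt9 (k U W : Type*) [Field k] [IsAlgClosed k]
    [AddCommGroup U] [Module k U] [FiniteDimensional k U]
    [AddCommGroup W] [Module k W] [FiniteDimensional k W]
    (n m d : ℕ) (hU : Module.finrank k U = n) (hW : Module.finrank k W = m)
    (hn : 2 ≤ n) (hm : 4 ≤ m)
    (hd1 : (2 * n : ℚ) / m < d) (hd2 : (d : ℚ) < n * m - (2 * n : ℚ) / m) :
    ∃ L : Submodule k (TensorProduct k U W),
      Module.finrank k L = d ∧ Anchors k U W L := by
  have bU : Module.Basis (Fin n) k U := Module.finBasisOfFinrankEq k U hU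
  have bW : Module.Basis (Fin m) k W := Module.finBasisOfFinrankEq k W hW
  have hm0 : (0 : ℚ) < (m : ℚ) := by
    have : (0 : ℕ) < m := by omega
    exact_mod_cast this
  have hmd : 2 * n < d * m := by
    have h := (div_lt_iff₀ hm0).mp hd1
    exact_mod_cast h
  have hdnm : d < n * m := by
    have h2 : (0 : ℚ) < (2 * n : ℚ) / m := by
      apply div_pos _ hm0
      have : (0 : ℕ) < 2 * n := by omega
      exact_mod_cast this
    have h3 : (d : ℚ) < (n : ℚ) * m := by linarith
    exact_mod_cast h3
  have hme : 2 * n < (n * m - d) * m := by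
    have hcast : ((n * m - d : ℕ) : ℚ) = (n : ℚ) * m - d := by
      rw [Nat.cast_sub hdnm.le]
      push_cast
      ring
    have h3 : (2 * n : ℚ) / m < ((n * m - d : ℕ) : ℚ) := by rw [hcast]; linarith
    have h4 := (div_lt_iff₀ hm0).mp h3
    exact_mod_cast h4
  have hd0 : 0 < d := by
    rcases Nat.eq_zero_or_pos d with rfl | hd0
    · rw [Nat.zero_mul] at hmd; omega
    · exact hd0
  rcases le_or_gt d n with hdn | hnd
  · -- small case : d ≤ n
    let μ : Fin d → k := fun t => Infinite.natEmbedding k (t : ℕ)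
    have hμ : Function.Injective μ := by
      intro a b hab
      exact Fin.ext ((Infinite.natEmbedding k).injective hab)
    exact range_case bU bW (Asmall k n d m μ)
      (Asmall_inj (by omega) hdn μ)
      (Asmall_core hm hd0 hdn (covlemma hm hmd) μ hμ)
  · rcases le_or_gt d (m * n - n + 1) with hdm | hdm2
    · -- large case : n + 1 ≤ d ≤ m*n - n + 1
      exact range_case bU bW (Avin k n d m)
        (Avin_inj hm (by omega) hnd hdm)
        (Avin_core hm (by omega) hnd)
    · -- huge case : use the kernel construction with e = n*m - d
      have hmncomm : m * n = n * m := Nat.mul_comm _ _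
      have hen : n * m - d ≤ n := by omega
      have he0 : 0 < n * m - d := by omega
      let μe : Fin (n * m - d) → k := fun t => Infinite.natEmbedding k (t : ℕ)
      have hμe : Function.Injective μe := by
        intro a b hab
        exact Fin.ext ((Infinite.natEmbedding k).injective hab)
      obtain ⟨L, hL1, hL2⟩ := kernel_case bU bW (Asmall k n (n * m - d) m μe)
        (by omega) hen (Asmall_zero (by omega) μe)
        (Asmall_core hm he0 hen (covlemma hm hme) μe hμe)
      exact ⟨L, by omega, hL2⟩

end final
end

section
/- Let U, W be finite-dimensional k-vector spaces over an algebraically closed field k. The set of d-dimensional subspaces L ∈ Gr(d, U ⊗ W) that anchor U is Zariski open in the Grassmannian Gr(d, U ⊗ W). -/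
open Matrix in
/-- A finite family of vectors in a function space `I → k` is linearly independent iff
some square "minor" matrix obtained by selecting coordinates has nonzero determinant. -/
lemma aux_li_iff_det {k : Type*} [Field k] {I : Type*} [Fintype I] [DecidableEq I]
    {r : ℕ} (v : Fin r → I → k) :
    LinearIndependent k v ↔
      ∃ s : Fin r → I, (Matrix.of fun a j : Fin r => v a (s j)).det ≠ 0 := by
  constructor
  · intro h
    have hfr : Module.finrank k (Fin r → k) = r := Module.finrank_fin_fun k
    have hrank : (Matrix.of v).rank = r := by
      simpa using LinearIndependent.rank_matrix (M := Matrix.of v) h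
    have hspan : Submodule.span k (Set.range (Matrix.of v)ᵀ) = ⊤ := by
      apply Submodule.eq_top_of_finrank_eq
      have := Matrix.rank_eq_finrank_span_cols (Matrix.of v)
      rw [hrank] at this
      rw [hfr]; exact this.symm
    obtain ⟨t, hts, hsp, hli⟩ := exists_linearIndependent k (Set.range (Matrix.of v)ᵀ)
    rw [hspan] at hsp
    have hBs : ⊤ ≤ Submodule.span k (Set.range ((↑) : t → (Fin r → k))) := by
      rw [Subtype.range_coe]; exact hsp.ge
    let B : Module.Basis t k (Fin r → k) := Module.Basis.mk hli hBs
    haveI : Fintype t := FiniteDimensional.fintypeBasisIndex B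
    have hcard : Fintype.card t = r := (Module.finrank_eq_card_basis B).symm.trans hfr
    let e : Fin r ≃ t := (Fintype.equivFinOfCardEq hcard).symm
    have hpre : ∀ a : Fin r, ∃ j : I, (Matrix.of v)ᵀ j = (e a : Fin r → k) :=
      fun a => hts (e a).2
    choose s hs using hpre
    refine ⟨s, ?_⟩
    have hU : IsUnit (Matrix.of fun a j : Fin r => v a (s j)) := by
      rw [← Matrix.linearIndependent_cols_iff_isUnit]
      have hcols : (fun j : Fin r => (Matrix.of fun a j : Fin r => v a (s j))ᵀ j)
          = fun j : Fin r => (e j : Fin r → k) := by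
        funext j
        rw [← hs j]
        rfl
      change LinearIndependent k (fun j : Fin r => (Matrix.of fun a j : Fin r => v a (s j))ᵀ j)
      rw [hcols]
      exact hli.comp e e.injective
    exact ((Matrix.isUnit_iff_isUnit_det _).mp hU).ne_zero
  · rintro ⟨s, hdet⟩
    rw [Fintype.linearIndependent_iff]
    intro g hg
    have h0 : g ᵥ* (Matrix.of fun a j : Fin r => v a (s j)) = 0 := by
      funext j
      have hgj := congrFun hg (s j)
      simpa [Matrix.vecMul, dotProduct, Finset.sum_apply] using hgj
    have hz := Matrix.eq_zero_of_vecMul_eq_zero hdet h0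
    exact fun a => congrFun hz a

open Matrix in
/-- Membership in the span of a linearly independent family, via vanishing of all
augmented minors. -/
lemma aux_mem_span_iff_det {k : Type*} [Field k] {I : Type*} [Fintype I] [DecidableEq I]
    {d : ℕ} {Mrow : Fin d → I → k} (hM : LinearIndependent k Mrow) (w : I → k) :
    w ∈ Submodule.span k (Set.range Mrow) ↔
      ∀ s : Fin (d+1) → I,
        (Matrix.of fun a j : Fin (d+1) => (Fin.snoc Mrow w : Fin (d+1) → I → k) a (s j)).det = 0 := by
  have h1 : LinearIndependent k (Fin.snoc Mrow w : Fin (d+1) → I → k) ↔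
      w ∉ Submodule.span k (Set.range Mrow) := by
    rw [linearIndependent_fin_snoc]; simp [hM]
  constructor
  · intro hw s
    by_contra hne
    exact (h1.mp ((aux_li_iff_det _).mpr ⟨s, hne⟩)) hw
  · intro hall
    by_contra hw
    obtain ⟨s, hs⟩ := (aux_li_iff_det _).mp (h1.mpr hw)
    exact hs (hall s)

lemma aux_snoc_updateRow {k : Type*} [Field k] {I : Type*} {d : ℕ}
    (Mrow : Fin d → I → k) (w : I → k) (s : Fin (d+1) → I) :
    (Matrix.of fun a j : Fin (d+1) => (Fin.snoc Mrow w : Fin (d+1) → I → k) a (s j)) =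
      Matrix.updateRow (Matrix.of fun a j : Fin (d+1) => (Fin.snoc Mrow (0 : I → k) : Fin (d+1) → I → k) a (s j))
        (Fin.last d) (fun j => w (s j)) := by
  funext a j
  refine Fin.lastCases ?_ ?_ a
  · simp
  · intro a'
    rw [Matrix.updateRow_ne (Fin.castSucc_lt_last a').ne]
    simp

/-- The set of d-dimensional subspaces of U ⊗ W anchoring U is Zariski open in the
Grassmannian Gr(d, U ⊗ W).  Openness is expressed via the standard parametrization of
subspaces by full-rank d×N matrices of coordinates (with respect to a basis b of
U ⊗ W): the anchoring locus is the locus of non-vanishing of a family S of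
polynomials in the matrix entries. -/
theorem stmt16 (k U W : Type*) [Field k] [IsAlgClosed k]
    [AddCommGroup U] [Module k U] [FiniteDimensional k U]
    [AddCommGroup W] [Module k W] [FiniteDimensional k W]
    (d N : ℕ) (b : Module.Basis (Fin N) k (TensorProduct k U W)) :
    ∃ S : Set (MvPolynomial (Fin d × Fin N) k),
      ∀ M : Matrix (Fin d) (Fin N) k,
        LinearIndependent k (fun i : Fin d => ∑ j : Fin N, M i j • b j) →
        (Anchors k U W
            (Submodule.span k (Set.range fun i : Fin d => ∑ j : Fin N, M i j • b j)) ↔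
          ∃ P ∈ S, MvPolynomial.eval (fun p : Fin d × Fin N => M p.1 p.2) P ≠ 0) := by
  classical
  obtain ⟨Wc, hWc⟩ := Submodule.exists_isCompl (Submodule.span k {(1 : Module.End k U)})
  set q := Module.finrank k Wc with hq
  let fB : Module.Basis (Fin q) k Wc := Module.finBasis k Wc
  let f : Fin q → Module.End k U := fun t => (fB t : Module.End k U)
  let E := b.equivFun
  let coeff : Fin q → Fin N → Fin N → k :=
    fun t j j' => b.repr (LinearMap.rTensor W (f t) (b j)) j'
  let Xrow : Fin d → Fin N → MvPolynomial (Fin d × Fin N) k := fun i j => MvPolynomial.X (i, j)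
  let Cpoly : Fin q → Fin d → Fin N → MvPolynomial (Fin d × Fin N) k :=
    fun t i j' => ∑ j : Fin N, MvPolynomial.X (i, j) * MvPolynomial.C (coeff t j j')
  let Ppoly : Fin q → (Fin d × (Fin (d+1) → Fin N)) → MvPolynomial (Fin d × Fin N) k :=
    fun t p =>
      (Matrix.of fun a j : Fin (d+1) =>
        (Fin.snoc Xrow (Cpoly t p.1) :
          Fin (d+1) → Fin N → MvPolynomial (Fin d × Fin N) k) a (p.2 j)).det
  refine ⟨Set.range (fun s : Fin q → (Fin d × (Fin (d+1) → Fin N)) =>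
    (Matrix.of fun a j : Fin q => Ppoly a (s j)).det), ?_⟩
  intro M hli
  set v : Fin d → TensorProduct k U W := fun i => ∑ j : Fin N, M i j • b j with hv
  set L := Submodule.span k (Set.range v) with hL
  set Mrow : Fin d → Fin N → k := fun i => M i with hMrow
  set μ : Fin d × Fin N → k := fun p => M p.1 p.2 with hμ
  have hEv : ∀ i, E (v i) = Mrow i := by
    intro i
    have hvi : v i = E.symm (Mrow i) := by
      rw [hv]
      simp [E, Module.Basis.equivFun_symm_apply, hMrow]
    rw [hvi, LinearEquiv.apply_symm_apply]
  have hMli : LinearIndependent k Mrow := by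
    have h2 : LinearIndependent k (E.toLinearMap ∘ v) :=
      hli.map' E.toLinearMap (LinearMap.ker_eq_bot_of_injective E.injective)
    have : E.toLinearMap ∘ v = Mrow := by
      funext i; exact hEv i
    rwa [this] at h2
  have hmemL : ∀ x : TensorProduct k U W, x ∈ L ↔ E x ∈ Submodule.span k (Set.range Mrow) := by
    intro x
    have hmap : Submodule.map (E : TensorProduct k U W →ₗ[k] (Fin N → k)) L
        = Submodule.span k (Set.range Mrow) := by
      rw [hL, Submodule.map_span]
      congr 1
      rw [← Set.range_comp]
      exact congrArg _ (funext fun i => hEv i)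
    rw [← hmap, Submodule.mem_map_equiv, LinearEquiv.symm_apply_apply]
  let crow : Module.End k U → Fin d → Fin N → k := fun φ i => E (LinearMap.rTensor W φ (v i))
  let D : Module.End k U → (Fin d × (Fin (d+1) → Fin N)) → k := fun φ p =>
    (Matrix.of fun a j : Fin (d+1) => (Fin.snoc Mrow (crow φ p.1) : Fin (d+1) → Fin N → k) a (p.2 j)).det
  have hcrow_add : ∀ φ ψ : Module.End k U, crow (φ + ψ) = crow φ + crow ψ := by
    intro φ ψ
    funext i j'
    simp [crow, LinearMap.rTensor_add, LinearMap.add_apply, map_add]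
  have hcrow_smul : ∀ (c : k) (φ : Module.End k U), crow (c • φ) = c • crow φ := by
    intro c φ
    funext i j'
    simp [crow, LinearMap.rTensor_smul, LinearMap.smul_apply, map_smul]
  have hD_add : ∀ (φ ψ : Module.End k U) p, D (φ + ψ) p = D φ p + D ψ p := by
    intro φ ψ p
    show (Matrix.of fun a j : Fin (d+1) =>
        (Fin.snoc Mrow (crow (φ + ψ) p.1) : Fin (d+1) → Fin N → k) a (p.2 j)).det
      = (Matrix.of fun a j : Fin (d+1) =>
          (Fin.snoc Mrow (crow φ p.1) : Fin (d+1) → Fin N → k) a (p.2 j)).det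
        + (Matrix.of fun a j : Fin (d+1) =>
          (Fin.snoc Mrow (crow ψ p.1) : Fin (d+1) → Fin N → k) a (p.2 j)).det
    rw [aux_snoc_updateRow Mrow (crow (φ + ψ) p.1) p.2,
      aux_snoc_updateRow Mrow (crow φ p.1) p.2, aux_snoc_updateRow Mrow (crow ψ p.1) p.2]
    have h1 : (fun j => crow (φ + ψ) p.1 (p.2 j))
        = (fun j => crow φ p.1 (p.2 j)) + fun j => crow ψ p.1 (p.2 j) := by
      rw [hcrow_add]; rfl
    rw [h1, Matrix.det_updateRow_add]
  have hD_smul : ∀ (c : k) (φ : Module.End k U) p, D (c • φ) p = c * D φ p := by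
    intro c φ p
    show (Matrix.of fun a j : Fin (d+1) =>
        (Fin.snoc Mrow (crow (c • φ) p.1) : Fin (d+1) → Fin N → k) a (p.2 j)).det
      = c * (Matrix.of fun a j : Fin (d+1) =>
          (Fin.snoc Mrow (crow φ p.1) : Fin (d+1) → Fin N → k) a (p.2 j)).det
    rw [aux_snoc_updateRow Mrow (crow (c • φ) p.1) p.2,
      aux_snoc_updateRow Mrow (crow φ p.1) p.2]
    have h1 : (fun j => crow (c • φ) p.1 (p.2 j)) = c • fun j => crow φ p.1 (p.2 j) := by
      rw [hcrow_smul]; rfl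
    rw [h1, Matrix.det_updateRow_smul]
  let Φ : Module.End k U →ₗ[k] ((Fin d × (Fin (d+1) → Fin N)) → k) :=
    { toFun := fun φ => fun p => D φ p
      map_add' := fun φ ψ => funext fun p => hD_add φ ψ p
      map_smul' := fun c φ => funext fun p => hD_smul c φ p }
  have hker : ∀ φ : Module.End k U,
      (∀ x ∈ L, LinearMap.rTensor W φ x ∈ L) ↔ Φ φ = 0 := by
    intro φ
    have step1 : (∀ x ∈ L, LinearMap.rTensor W φ x ∈ L) ↔
        ∀ i, LinearMap.rTensor W φ (v i) ∈ L := by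
      constructor
      · intro h i; exact h _ (Submodule.subset_span ⟨i, rfl⟩)
      · intro h x hx
        have hle : L ≤ Submodule.comap (LinearMap.rTensor W φ) L := by
          rw [hL, Submodule.span_le]
          rintro _ ⟨i, rfl⟩; exact h i
        exact hle hx
    have step2 : ∀ i, (LinearMap.rTensor W φ (v i) ∈ L) ↔
        ∀ s : Fin (d+1) → Fin N,
          (Matrix.of fun a j : Fin (d+1) => (Fin.snoc Mrow (crow φ i) : Fin (d+1) → Fin N → k) a (s j)).det = 0 := by
      intro i
      rw [hmemL, aux_mem_span_iff_det hMli]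
    rw [step1]
    constructor
    · intro h; funext p; exact (step2 p.1).mp (h p.1) p.2
    · intro h i
      rw [step2 i]; intro s; exact congrFun h (i, s)
  have h1mem : Φ (1 : Module.End k U) = 0 := by
    rw [← hker]
    intro x hx
    have hx' : LinearMap.rTensor W (1 : Module.End k U) x = x := by
      have h1 : (1 : Module.End k U) = LinearMap.id := rfl
      rw [h1, LinearMap.rTensor_id]; rfl
    rwa [hx']
  have hAnchors : Anchors k U W L ↔ LinearIndependent k (fun t => Φ (f t)) := by
    constructor
    · intro hA
      rw [Fintype.linearIndependent_iff]
      intro g hg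
      have hsum : Φ (∑ t, g t • f t) = 0 := by
        rw [map_sum]
        simpa only [map_smul] using hg
      obtain ⟨c, hc⟩ := hA _ ((hker _).mpr hsum)
      have hmemWc : (∑ t, g t • f t) ∈ Wc :=
        Submodule.sum_mem _ fun t _ => Submodule.smul_mem _ _ (fB t).2
      have hmemSp : (∑ t, g t • f t) ∈ Submodule.span k {(1 : Module.End k U)} := by
        rw [hc]; exact Submodule.smul_mem _ _ (Submodule.mem_span_singleton_self _)
      have h0 : (∑ t, g t • f t) = 0 :=
        (Submodule.disjoint_def.mp hWc.disjoint) _ hmemSp hmemWc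
      have h0' : (∑ t, g t • fB t) = (0 : Wc) := by
        apply Subtype.ext
        simpa [f] using h0
      exact Fintype.linearIndependent_iff.mp fB.linearIndependent g h0'
    · intro hind φ hφ
      have hφ0 : Φ φ = 0 := (hker φ).mp hφ
      have hmem : φ ∈ (Submodule.span k {(1 : Module.End k U)}) ⊔ Wc := by
        rw [hWc.sup_eq_top]; trivial
      obtain ⟨y, hy, z, hz, hyz⟩ := Submodule.mem_sup.mp hmem
      obtain ⟨c, hcy⟩ := Submodule.mem_span_singleton.mp hy
      have hzel : z = ∑ t, fB.repr ⟨z, hz⟩ t • f t := by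
        have hrepr := fB.sum_repr ⟨z, hz⟩
        have := congrArg (Subtype.val : Wc → Module.End k U) hrepr
        simp only [Submodule.coe_sum, Submodule.coe_smul] at this
        exact this.symm
      have hΦz : Φ z = 0 := by
        have hzφ : z = φ - c • (1 : Module.End k U) := by
          rw [hcy, ← hyz]
          abel
        rw [hzφ, map_sub, hφ0, map_smul, h1mem]
        simp
      have hg0 : ∀ t, fB.repr ⟨z, hz⟩ t = 0 := by
        apply Fintype.linearIndependent_iff.mp hind
        rw [hzel] at hΦz
        rw [map_sum] at hΦz
        simpa only [map_smul] using hΦz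
      have hz0 : z = 0 := by
        rw [hzel]
        simp [hg0]
      exact ⟨c, by rw [← hyz, hz0, add_zero]; exact hcy.symm⟩
  have hEval : ∀ t p, MvPolynomial.eval μ (Ppoly t p) = Φ (f t) p := by
    intro t p
    show MvPolynomial.eval μ (Ppoly t p) = D (f t) p
    rw [show Ppoly t p = (Matrix.of fun a j : Fin (d+1) =>
        (Fin.snoc Xrow (Cpoly t p.1) :
          Fin (d+1) → Fin N → MvPolynomial (Fin d × Fin N) k) a (p.2 j)).det from rfl]
    rw [RingHom.map_det]
    congr 1
    funext a j
    simp only [RingHom.mapMatrix_apply, Matrix.map_apply, Matrix.of_apply]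
    refine Fin.lastCases ?_ ?_ a
    · rw [Fin.snoc_last, Fin.snoc_last]
      have hrhs : crow (f t) p.1 (p.2 j) = ∑ j₂, M p.1 j₂ * coeff t j₂ (p.2 j) := by
        simp only [crow, hv, map_sum, map_smul, Finset.sum_apply, Pi.smul_apply, smul_eq_mul,
          E, Module.Basis.equivFun_apply, coeff]
      rw [hrhs]
      simp [Cpoly, μ]
    · intro a'
      rw [Fin.snoc_castSucc, Fin.snoc_castSucc]
      simp [Xrow, μ, hMrow]
  have hSdet : ∀ s : Fin q → (Fin d × (Fin (d+1) → Fin N)),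
      MvPolynomial.eval μ ((Matrix.of fun a j : Fin q => Ppoly a (s j)).det)
        = (Matrix.of fun a j : Fin q => Φ (f a) (s j)).det := by
    intro s
    rw [RingHom.map_det]
    congr 1
    funext a j
    simp only [RingHom.mapMatrix_apply, Matrix.map_apply, Matrix.of_apply]
    exact hEval a (s j)
  rw [hAnchors, aux_li_iff_det]
  constructor
  · rintro ⟨s, hs⟩
    exact ⟨_, ⟨s, rfl⟩, by rw [hSdet s]; exact hs⟩
  · rintro ⟨P, ⟨s, rfl⟩, hP⟩
    exact ⟨s, by rw [← hSdet s]; exact hP⟩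
end

section
/- Let k be an algebraically closed field, let d ≥ 1, and let B₁ = diag(λ₁,...,λ_d) with λᵢ pairwise distinct. Then there exist linearly independent vectors x₁,...,x_d ∈ k^d such that no nonempty proper subset of {x₁,...,x_d} spans any nontrivial B₁-invariant subspace, and consequently the matrix B₂ having x₁,...,x_d as eigenvectors with pairwise distinct eigenvalues shares no invariant subspace with B₁ other than 0 and k^d. -/
open Finsupp

section aux
variable {k V ι : Type*} [Field k] [AddCommGroup V] [Module k V] [Fintype ι] [DecidableEq ι]

omit [DecidableEq ι] in
lemma repr_apply_eig (b : Module.Basis ι k V) (f : V →ₗ[k] V) (mu : ι → k)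
    (hf : ∀ i, f (b i) = mu i • b i) (y : V) (i : ι) :
    b.repr (f y) i = mu i * b.repr y i := by
  conv_lhs => rw [← b.sum_repr y]
  rw [map_sum, map_sum]
  simp only [map_smul, hf, Module.Basis.repr_self]
  rw [Finsupp.finset_sum_apply, Finset.sum_eq_single i]
  · simp [mul_comm]
  · intro j _ hji
    simp [Finsupp.single_apply, hji]
  · simp

lemma eig_mem (b : Module.Basis ι k V) (f : V →ₗ[k] V) (mu : ι → k) (hmu : Function.Injective mu)
    (hf : ∀ i, f (b i) = mu i • b i) (U : Submodule k V) (hU : ∀ y ∈ U, f y ∈ U) :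
    ∀ (n : ℕ) (y : V), y ∈ U → (b.repr y).support.card ≤ n → ∀ i, b.repr y i ≠ 0 → b i ∈ U := by
  intro n
  induction n with
  | zero =>
    intro y _ hcard i hi
    have : i ∈ (b.repr y).support := Finsupp.mem_support_iff.mpr hi
    have := Finset.card_pos.mpr ⟨i, this⟩
    omega
  | succ n ih =>
    intro y hy hcard i hi
    by_cases hs : ∀ j ∈ (b.repr y).support, j = i
    · -- y = (b.repr y i) • b i
      have hrepr : b.repr y = Finsupp.single i (b.repr y i) := by
        ext j
        by_cases hji : j = i
        · simp [hji]
        · have : j ∉ (b.repr y).support := fun h => hji (hs j h)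
          simp only [Finsupp.notMem_support_iff] at this
          simp [this, Finsupp.single_apply, Ne.symm hji, hji]
      have hy' : y = (b.repr y i) • b i := by
        apply b.repr.injective
        rw [map_smul, Module.Basis.repr_self, Finsupp.smul_single, smul_eq_mul, mul_one]
        exact hrepr
      obtain ⟨c, hc⟩ : ∃ c, b.repr y i = c := ⟨_, rfl⟩
      rw [hc] at hy' hi
      have hbi : c⁻¹ • y = b i := by
        rw [hy', smul_smul, inv_mul_cancel₀ hi, one_smul]
      rw [← hbi]
      exact U.smul_mem _ hy
    · push_neg at hs
      obtain ⟨j, hjs, hji⟩ := hs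
      set z := f y - mu j • y with hz
      have hzU : z ∈ U := U.sub_mem (hU y hy) (U.smul_mem _ hy)
      have hzrepr : ∀ i', b.repr z i' = (mu i' - mu j) * b.repr y i' := by
        intro i'
        simp [hz, repr_apply_eig b f mu hf, sub_mul]
      have hzj : b.repr z j = 0 := by simp [hzrepr]
      have hsub : (b.repr z).support ⊆ (b.repr y).support.erase j := by
        intro i' hi'
        rw [Finsupp.mem_support_iff] at hi'
        rw [Finset.mem_erase, Finsupp.mem_support_iff]
        constructor
        · rintro rfl; exact hi' hzj
        · intro h0; exact hi' (by rw [hzrepr, h0, mul_zero])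
      have hcard' : (b.repr z).support.card ≤ n := by
        have h1 := Finset.card_le_card hsub
        have h2 : ((b.repr y).support.erase j).card < (b.repr y).support.card :=
          Finset.card_erase_lt_of_mem hjs
        omega
      refine ih z hzU hcard' i ?_
      rw [hzrepr]
      exact mul_ne_zero (sub_ne_zero.mpr (fun h => hji (hmu h).symm)) hi

lemma eig_basis_mem (b : Module.Basis ι k V) (f : V →ₗ[k] V) (mu : ι → k) (hmu : Function.Injective mu)
    (hf : ∀ i, f (b i) = mu i • b i) (U : Submodule k V) (hU : ∀ y ∈ U, f y ∈ U)
    (y : V) (hy : y ∈ U) (i : ι) (hi : b.repr y i ≠ 0) : b i ∈ U :=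
  eig_mem b f mu hmu hf U hU _ y hy le_rfl i hi

lemma exists_basis_mem (b : Module.Basis ι k V) (f : V →ₗ[k] V) (mu : ι → k) (hmu : Function.Injective mu)
    (hf : ∀ i, f (b i) = mu i • b i) (U : Submodule k V) (hU : ∀ y ∈ U, f y ∈ U)
    (hbot : U ≠ ⊥) : ∃ i, b i ∈ U := by
  obtain ⟨y, hy, hy0⟩ := Submodule.exists_mem_ne_zero_of_ne_bot hbot
  have : b.repr y ≠ 0 := fun h => hy0 (by simpa using b.repr.injective (by simpa using h))
  obtain ⟨i, hi⟩ := Finsupp.ne_iff.mp this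
  exact ⟨i, eig_basis_mem b f mu hmu hf U hU y hy i (by simpa using hi)⟩

lemma exists_zero_coord (b : Module.Basis ι k V) (f : V →ₗ[k] V) (mu : ι → k) (hmu : Function.Injective mu)
    (hf : ∀ i, f (b i) = mu i • b i) (U : Submodule k V) (hU : ∀ y ∈ U, f y ∈ U)
    (htop : U ≠ ⊤) : ∃ j, ∀ y ∈ U, b.repr y j = 0 := by
  by_contra h
  push_neg at h
  apply htop
  rw [eq_top_iff, ← b.span_eq, Submodule.span_le]
  rintro _ ⟨j, rfl⟩
  obtain ⟨y, hy, hyj⟩ := h j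
  exact eig_basis_mem b f mu hmu hf U hU y hy j hyj

end aux

/-- Given a diagonal matrix B₁ with pairwise distinct entries over an algebraically
closed field, there are linearly independent vectors x₁,...,x_d no nonempty proper
subset of which spans a nontrivial B₁-invariant subspace; consequently any matrix B₂
having the xᵢ as eigenvectors with pairwise distinct eigenvalues shares no invariant
subspace with B₁ other than 0 and k^d. -/
theorem stmt19 (k : Type*) [Field k] [IsAlgClosed k] (d : ℕ) (hd : 1 ≤ d)
    (lam : Fin d → k) (hlam : Function.Injective lam) :
    ∃ x : Fin d → (Fin d → k),
      LinearIndependent k x ∧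
      (∀ s : Finset (Fin d), s.Nonempty → s ≠ Finset.univ →
        ∀ U : Submodule k (Fin d → k),
          (∀ y ∈ U, (Matrix.diagonal lam).mulVec y ∈ U) →
          U ≠ ⊥ → U ≠ ⊤ → Submodule.span k (x '' ↑s) ≠ U) ∧
      (∀ (B₂ : Matrix (Fin d) (Fin d) k) (mu : Fin d → k),
        Function.Injective mu → (∀ i, B₂.mulVec (x i) = mu i • x i) →
        ∀ U : Submodule k (Fin d → k),
          (∀ y ∈ U, (Matrix.diagonal lam).mulVec y ∈ U) →
          (∀ y ∈ U, B₂.mulVec y ∈ U) → U = ⊥ ∨ U = ⊤) := by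
  classical
  obtain ⟨c, hc⟩ := Infinite.exists_notMem_finset ({0, -1, -((d:k))⁻¹} : Finset k)
  simp only [Finset.mem_insert, Finset.mem_singleton, not_or] at hc
  obtain ⟨hc0, hc1, hcd'⟩ := hc
  have hc1' : 1 + c ≠ 0 := by
    intro h; apply hc1; linear_combination h
  have hcd : 1 + c * (d:k) ≠ 0 := by
    intro h
    by_cases hdk : (d:k) = 0
    · rw [hdk, mul_zero, add_zero] at h; exact one_ne_zero h
    · apply hcd'
      rw [← one_div, ← neg_div, eq_div_iff hdk]
      linear_combination h
  set x : Fin d → Fin d → k := fun i j => (if i = j then 1 else 0) + c with hxdef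
  have hxne : ∀ i j, x i j ≠ 0 := by
    intro i j
    by_cases h : i = j <;> simp [hxdef, h, hc0, hc1']
  -- linear independence
  have hxli : LinearIndependent k x := by
    rw [Fintype.linearIndependent_iff]
    intro g hg
    have hgj : ∀ j, g j + (∑ i, g i) * c = 0 := by
      intro j
      have h0 := congrFun hg j
      simp only [Finset.sum_apply, Pi.smul_apply, smul_eq_mul, hxdef, Pi.zero_apply,
        mul_add, Finset.sum_add_distrib, mul_ite, mul_one, mul_zero,
        Finset.sum_ite_eq', Finset.mem_univ, if_true, ← Finset.sum_mul] at h0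
      exact h0
    have hS : (∑ i, g i) = 0 := by
      have h2 : (∑ i, g i) * (1 + c * (d:k)) = 0 := by
        have e : ∑ j : Fin d, (g j + (∑ i, g i) * c) = (∑ i, g i) * (1 + c * (d:k)) := by
          rw [Finset.sum_add_distrib, Finset.sum_const, Finset.card_univ, Fintype.card_fin,
            nsmul_eq_mul]
          ring
        rw [← e]
        exact Finset.sum_eq_zero (fun j _ => hgj j)
      exact (mul_eq_zero.mp h2).resolve_right hcd
    intro i
    have := hgj i
    rw [hS, zero_mul, add_zero] at this
    exact this
  -- the diagonal operator
  set f1 : (Fin d → k) →ₗ[k] (Fin d → k) := (Matrix.diagonal lam).mulVecLin with hf1def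
  have hdiag : ∀ i, f1 (Pi.basisFun k (Fin d) i) = lam i • Pi.basisFun k (Fin d) i := by
    intro i
    funext j
    by_cases h : j = i <;>
      simp [hf1def, Matrix.mulVecLin_apply, Matrix.mulVec_single, Matrix.diagonal_apply, h,
        Pi.single_apply]
  -- Part 2
  have part2 : ∀ s : Finset (Fin d), s.Nonempty → s ≠ Finset.univ →
      ∀ U : Submodule k (Fin d → k),
        (∀ y ∈ U, (Matrix.diagonal lam).mulVec y ∈ U) →
        U ≠ ⊥ → U ≠ ⊤ → Submodule.span k (x '' ↑s) ≠ U := by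
    intro s hs _ U hUinv _ hUtop hspan
    have hUinv' : ∀ y ∈ U, f1 y ∈ U := by
      simpa [hf1def, Matrix.mulVecLin_apply] using hUinv
    obtain ⟨j, hj⟩ := exists_zero_coord (Pi.basisFun k (Fin d)) f1 lam hlam hdiag U hUinv' hUtop
    obtain ⟨i, hi⟩ := hs
    have hxiU : x i ∈ U := by
      rw [← hspan]
      exact Submodule.subset_span ⟨i, hi, rfl⟩
    have := hj _ hxiU
    rw [Pi.basisFun_repr] at this
    exact hxne i j this
  refine ⟨x, hxli, part2, ?_⟩
  -- Part 3
  intro B₂ mu hmu hB2 U h1 h2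
  by_contra hcon
  push_neg at hcon
  obtain ⟨hbot, htop⟩ := hcon
  have : Nonempty (Fin d) := ⟨⟨0, hd⟩⟩
  have hcard : Fintype.card (Fin d) = Module.finrank k (Fin d → k) := by simp
  let bx : Module.Basis (Fin d) k (Fin d → k) := basisOfLinearIndependentOfCardEqFinrank hxli hcard
  have hbx : ∀ i, bx i = x i := fun i => by
    rw [show bx = basisOfLinearIndependentOfCardEqFinrank hxli hcard from rfl,
      coe_basisOfLinearIndependentOfCardEqFinrank]
  have hfB2 : ∀ i, B₂.mulVecLin (bx i) = mu i • bx i := by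
    intro i
    rw [hbx i, Matrix.mulVecLin_apply, hB2 i]
  have h2' : ∀ y ∈ U, B₂.mulVecLin y ∈ U := by
    simpa [Matrix.mulVecLin_apply] using h2
  set t : Finset (Fin d) := Finset.univ.filter (fun i => x i ∈ U) with htdef
  have ht1 : t.Nonempty := by
    obtain ⟨i0, hi0⟩ := exists_basis_mem bx B₂.mulVecLin mu hmu hfB2 U h2' hbot
    exact ⟨i0, by simp [htdef, ← hbx i0, hi0]⟩
  obtain ⟨j, hj⟩ := exists_zero_coord bx B₂.mulVecLin mu hmu hfB2 U h2' htop
  have hxjU : x j ∉ U := by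
    intro hmem
    have := hj _ hmem
    rw [← hbx j, Module.Basis.repr_self] at this
    simp at this
  have ht2 : t ≠ Finset.univ := by
    intro h
    exact hxjU (by simpa [htdef] using (h ▸ Finset.mem_univ j : j ∈ t))
  have hspan : Submodule.span k (x '' ↑t) = U := by
    apply le_antisymm
    · rw [Submodule.span_le]
      rintro _ ⟨i, hit, rfl⟩
      have : i ∈ t := hit
      simpa [htdef] using this
    · intro y hy
      have hrepr := bx.sum_repr y
      rw [← hrepr]
      apply Submodule.sum_mem
      intro i _
      by_cases hci : bx.repr y i = 0
      · simp [hci]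
      · apply Submodule.smul_mem
        have hbiU : bx i ∈ U := eig_basis_mem bx B₂.mulVecLin mu hmu hfB2 U h2' y hy i hci
        have hit : i ∈ t := by simp [htdef, ← hbx i, hbiU]
        rw [hbx i]
        exact Submodule.subset_span ⟨i, hit, rfl⟩
  exact part2 t ht1 ht2 U h1 hbot htop hspan
end
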